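/- arXiv:1801.09537 — 8 statements merged into one kernel-verified Lean document; each statement's English description precedes it below -/
import Mathlib

section
/- Let f : ℝ → ℂ be a positive definite function, and suppose that f is of class C^{2k} on some open neighborhood of the origin. Then f is of class C^{2k} on all of ℝ. -/
open Complex MeasureTheory Filter Set Topology
open scoped Real BigOperators ComplexOrder

noncomputable section

/-- `f : ℝ → ℂ` is positive definite. -/
def IsPosDefFun (f : ℝ → ℂ) : Prop :=
  ∀ (n : ℕ) (x : Fin n → ℝ) (ξ : Fin n → ℂ),
    0 ≤ ∑ k, ∑ l, f (x k - x l) * ξ k * (starRingEnd ℂ) (ξ l)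

/-- `f` is positive definite on `S ⊆ ℂ`. -/
def IsPosDefOnC (f : ℂ → ℂ) (S : Set ℂ) : Prop :=
  ∀ (n : ℕ) (z : Fin n → ℂ), (∀ k l, z k - (starRingEnd ℂ) (z l) ∈ S) →
    ∀ ξ : Fin n → ℂ,
      0 ≤ ∑ k, ∑ l, f (z k - (starRingEnd ℂ) (z l)) * ξ k * (starRingEnd ℂ) (ξ l)

/-- `f` is co-positive definite on `T ⊆ ℂ`. -/
def IsCoPosDefOnC (f : ℂ → ℂ) (T : Set ℂ) : Prop :=
  ∀ (n : ℕ) (z : Fin n → ℂ), (∀ k l, z k + (starRingEnd ℂ) (z l) ∈ T) →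
    ∀ ξ : Fin n → ℂ,
      0 ≤ ∑ k, ∑ l, f (z k + (starRingEnd ℂ) (z l)) * ξ k * (starRingEnd ℂ) (ξ l)

/-- `G : ℝ → ℂ` is co-positive definite on `I ⊆ ℝ`. -/
def IsCoPosDefOnR (G : ℝ → ℂ) (I : Set ℝ) : Prop :=
  ∀ (n : ℕ) (x : Fin n → ℝ), (∀ k l, x k + x l ∈ I) →
    ∀ ξ : Fin n → ℂ,
      0 ≤ ∑ k, ∑ l, G (x k + x l) * ξ k * (starRingEnd ℂ) (ξ l)

/-- Horizontal strip `S_{a,b}`. -/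
def HStrip (a b : EReal) : Set ℂ := {z | a < (z.im : EReal) ∧ (z.im : EReal) < b}

/-- Vertical strip `T_{a,b}`. -/
def VStrip (a b : EReal) : Set ℂ := {z | a < (z.re : EReal) ∧ (z.re : EReal) < b}

/-- `μ` is exponentially finite with respect to the interval `(a,b)`. -/
def ExpFinite (μ : Measure ℝ) (a b : EReal) : Prop :=
  ∀ y : ℝ, a < (y : EReal) → (y : EReal) < b →
    Integrable (fun t : ℝ => Real.exp (-y * t)) μ

open ComplexConjugate
open scoped InnerProductSpace

/-!
Positive definiteness makes `⟪ξ, η⟫ = ∑ conj (ξ x) η y f (y - x)` a semi-inner product on finitely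
supported `ξ : ℝ →₀ ℂ`, for which translations are isometries and `f x = ⟪δ₀, δₓ⟫`. An iterated
difference quotient of `f` of order `a + b` at `x` is then, up to sign, an inner product
`⟪u, shift x v⟫` of difference vectors `u`, `v` of orders `b` and `a`, and `‖u - u'‖²` is a
combination of difference quotients of order `2b` at `0`, which all tend to `f⁽²ᵇ⁾(0)` as the steps
tend to `0`. By Cauchy–Schwarz the difference quotients of each order `m ≤ 2k` are therefore
uniformly Cauchy on all of `ℝ`; their uniform limits are continuous, and each is the derivative of
the previous one.
-/

variable {E : Type*} [NormedAddCommGroup E] [NormedSpace ℝ E]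

def iterSlope : List ℝ → (ℝ → E) → ℝ → E
  | [], g => g
  | t :: L, g => fun x => t⁻¹ • (iterSlope L g (x + t) - iterSlope L g x)

@[simp]
lemma iterSlope_nil (g : ℝ → E) : iterSlope [] g = g := rfl

lemma iterSlope_cons (t : ℝ) (L : List ℝ) (g : ℝ → E) (x : ℝ) :
    iterSlope (t :: L) g x = t⁻¹ • (iterSlope L g (x + t) - iterSlope L g x) := rfl

lemma iterSlope_append (L₁ L₂ : List ℝ) (g : ℝ → E) :
    iterSlope (L₁ ++ L₂) g = iterSlope L₁ (iterSlope L₂ g) := by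
  induction L₁ with
  | nil => rfl
  | cons t L ih => funext x; simp only [List.cons_append, iterSlope_cons, ih]

lemma iterSlope_const_smul {R : Type*} [Monoid R] [DistribMulAction R E] [SMulCommClass ℝ R E]
    (c : R) (L : List ℝ) (g : ℝ → E) :
    iterSlope L (fun y => c • g y) = fun y => c • iterSlope L g y := by
  induction L with
  | nil => rfl
  | cons t L ih => funext x; simp only [iterSlope_cons, ih, ← smul_sub, smul_comm t⁻¹ c]

lemma continuous_iterSlope {g : ℝ → E} (hg : Continuous g) (L : List ℝ) :
    Continuous (iterSlope L g) := by
  induction L with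
  | nil => exact hg
  | cons t L ih => exact ((ih.comp (continuous_add_const t)).sub ih).const_smul _

lemma hasDerivAt_iterSlope {g g' : ℝ → E} (L : List ℝ) {x : ℝ}
    (hg : ∀ y, |y - x| ≤ (L.map abs).sum → HasDerivAt g (g' y) y) :
    HasDerivAt (iterSlope L g) (iterSlope L g' x) x := by
  induction L generalizing x with
  | nil => simpa using hg x (by simp)
  | cons t L ih =>
    have hshift : HasDerivAt (iterSlope L g) (iterSlope L g' (x + t)) (x + t) :=
      ih fun y hy => hg y <| by
        simp only [List.map_cons, List.sum_cons]
        linarith [abs_sub_le y (x + t) x, show |x + t - x| = |t| by ring_nf]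
    have hbase : HasDerivAt (iterSlope L g) (iterSlope L g' x) x :=
      ih fun y hy => hg y <| by simp only [List.map_cons, List.sum_cons]; linarith [abs_nonneg t]
    exact ((hshift.comp_add_const x t).sub hbase).const_smul t⁻¹

lemma norm_slope_sub_le {G G' : ℝ → E} {c : E} {x t ε : ℝ} (ht : t ≠ 0)
    (hd : ∀ y ∈ uIcc x (x + t), HasDerivAt G (G' y) y)
    (hb : ∀ y ∈ uIcc x (x + t), ‖G' y - c‖ ≤ ε) :
    ‖t⁻¹ • (G (x + t) - G x) - c‖ ≤ ε := by
  have hH : ∀ y ∈ uIcc x (x + t),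
      HasDerivWithinAt (fun y => G y - y • c) (G' y - c) (uIcc x (x + t)) y := fun y hy =>
    ((hd y hy).sub (by simpa using (hasDerivAt_id y).smul_const c)).hasDerivWithinAt
  have key := (convex_uIcc x (x + t)).norm_image_sub_le_of_norm_hasDerivWithin_le hH hb
    left_mem_uIcc right_mem_uIcc
  have hrw : G (x + t) - (x + t) • c - (G x - x • c) = t • (t⁻¹ • (G (x + t) - G x) - c) := by
    rw [smul_sub, smul_inv_smul₀ ht, add_smul]
    abel
  rw [hrw, add_sub_cancel_left, norm_smul, Real.norm_eq_abs, mul_comm ε] at key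
  exact le_of_mul_le_mul_left key (abs_pos.2 ht)

def smallSteps (m : ℕ) : Filter (List ℝ) :=
  ⨅ δ > 0, 𝓟 {L | L.length = m ∧ ∀ t ∈ L, t ≠ 0 ∧ |t| < δ}

lemma hasBasis_smallSteps (m : ℕ) :
    (smallSteps m).HasBasis (fun δ : ℝ => 0 < δ)
      fun δ => {L | L.length = m ∧ ∀ t ∈ L, t ≠ 0 ∧ |t| < δ} :=
  hasBasis_biInf_principal'
    (fun δ hδ ε hε => ⟨min δ ε, lt_min hδ hε,
      fun _ hL => ⟨hL.1, fun t ht => ⟨(hL.2 t ht).1, (hL.2 t ht).2.trans_le (min_le_left _ _)⟩⟩,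
      fun _ hL => ⟨hL.1, fun t ht => ⟨(hL.2 t ht).1, (hL.2 t ht).2.trans_le (min_le_right _ _)⟩⟩⟩)
    ⟨1, one_pos⟩

instance (m : ℕ) : (smallSteps m).NeBot :=
  (hasBasis_smallSteps m).neBot_iff.2 fun {δ} hδ =>
    ⟨List.replicate m (δ / 2), by simp, fun t ht => by
      rw [List.eq_of_mem_replicate ht, abs_of_pos (half_pos hδ)]
      exact ⟨(half_pos hδ).ne', half_lt_self hδ⟩⟩

lemma eventually_length_smallSteps (m : ℕ) : ∀ᶠ L in smallSteps m, L.length = m :=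
  (hasBasis_smallSteps m).eventually_iff.2 ⟨1, one_pos, fun _ hL => hL.1⟩

lemma eventually_eq_nil_smallSteps_zero : ∀ᶠ L in smallSteps 0, L = [] :=
  (eventually_length_smallSteps 0).mono fun _ => List.eq_nil_of_length_eq_zero

lemma tendsto_cons_smallSteps (m : ℕ) :
    Tendsto (fun p : ℝ × List ℝ => p.1 :: p.2) (𝓝[≠] 0 ×ˢ smallSteps m) (smallSteps (m + 1)) := by
  refine (hasBasis_smallSteps _).tendsto_right_iff.2 fun δ hδ => ?_
  have ht : ∀ᶠ t in 𝓝[≠] (0 : ℝ), t ≠ 0 ∧ |t| < δ :=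
    eventually_mem_nhdsWithin.and <| nhdsWithin_le_nhds <| by
      simpa [Metric.ball, Real.dist_eq] using Metric.ball_mem_nhds (0 : ℝ) hδ
  filter_upwards [ht.prod_mk ((hasBasis_smallSteps m).mem_of_mem hδ)] with ⟨t, L⟩ ⟨ht, hL⟩
  exact ⟨by simp [hL.1], by simpa using ⟨ht, hL.2⟩⟩

lemma tendsto_append_smallSteps (a b : ℕ) :
    Tendsto (fun p : List ℝ × List ℝ => p.1 ++ p.2) (smallSteps a ×ˢ smallSteps b)
      (smallSteps (a + b)) := by
  refine (hasBasis_smallSteps _).tendsto_right_iff.2 fun δ hδ => ?_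
  filter_upwards [((hasBasis_smallSteps a).prod (hasBasis_smallSteps b)).mem_of_mem
    (i := (δ, δ)) ⟨hδ, hδ⟩] with ⟨P, Q⟩ ⟨hP, hQ⟩
  refine ⟨by simp [hP.1, hQ.1], fun t ht => ?_⟩
  rcases List.mem_append.1 ht with h | h
  exacts [hP.2 t h, hQ.2 t h]

lemma tendsto_map_neg_smallSteps (m : ℕ) :
    Tendsto (List.map (fun t : ℝ => -t)) (smallSteps m) (smallSteps m) := by
  refine (hasBasis_smallSteps _).tendsto_right_iff.2 fun δ hδ => ?_
  filter_upwards [(hasBasis_smallSteps m).mem_of_mem hδ] with L hL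
  refine ⟨by simp [hL.1], fun t ht => ?_⟩
  obtain ⟨s, hs, rfl⟩ := List.mem_map.1 ht
  simpa using hL.2 s hs

lemma tendsto_take_smallSteps (a b : ℕ) :
    Tendsto (List.take a) (smallSteps (a + b)) (smallSteps a) := by
  refine (hasBasis_smallSteps _).tendsto_right_iff.2 fun δ hδ => ?_
  filter_upwards [(hasBasis_smallSteps _).mem_of_mem hδ] with L hL
  exact ⟨by simp [hL.1], fun t ht => hL.2 t (List.mem_of_mem_take ht)⟩

lemma tendsto_drop_smallSteps (a b : ℕ) :
    Tendsto (List.drop a) (smallSteps (a + b)) (smallSteps b) := by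
  refine (hasBasis_smallSteps _).tendsto_right_iff.2 fun δ hδ => ?_
  filter_upwards [(hasBasis_smallSteps _).mem_of_mem hδ] with L hL
  exact ⟨by simp [hL.1], fun t ht => hL.2 t (List.mem_of_mem_drop ht)⟩

lemma tendsto_iterSlope_succ_of_hasDerivAt {n : ℕ} {g g' : ℝ → E} {c : E}
    (hd : ∀ᶠ y in 𝓝 0, HasDerivAt g (g' y) y)
    (h : Tendsto (fun p : List ℝ × ℝ => iterSlope p.1 g' p.2) (smallSteps n ×ˢ 𝓝 0) (𝓝 c)) :
    Tendsto (fun p : List ℝ × ℝ => iterSlope p.1 g p.2) (smallSteps (n + 1) ×ˢ 𝓝 0) (𝓝 c) := by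
  have hB (m : ℕ) := (hasBasis_smallSteps m).prod (Metric.nhds_basis_ball (x := (0 : ℝ)))
  rw [(hB n).tendsto_iff Metric.nhds_basis_closedBall] at h
  rw [(hB (n + 1)).tendsto_iff Metric.nhds_basis_closedBall]
  intro ε hε
  obtain ⟨⟨δ₁, ρ₁⟩, ⟨hδ₁, hρ₁⟩, hsub⟩ := h ε hε
  obtain ⟨r, hr, hdr⟩ := Metric.eventually_nhds_iff.1 hd
  -- `ρ₁ / 2` keeps `[x, x + t]` in the ball where `hsub` applies, and `r / (n + 2)` keeps the
  -- points `y + (sums of steps of l)`, `y ∈ [x, x + t]`, in the ball where `g` is differentiable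
  set δ := min δ₁ (min (ρ₁ / 2) (r / (n + 2)))
  have hδ : 0 < δ := lt_min hδ₁ (lt_min (half_pos hρ₁) (by positivity))
  refine ⟨(δ, δ), ⟨hδ, hδ⟩, ?_⟩
  rintro ⟨_ | ⟨t, l⟩, x⟩ ⟨⟨hlen, hL⟩, hx⟩
  · simp at hlen
  simp only [List.length_cons, add_left_inj] at hlen
  simp only [Metric.mem_ball, Real.dist_eq, sub_zero] at hx
  obtain ⟨ht0, ht⟩ := hL t List.mem_cons_self
  have hl : ∀ s ∈ l, s ≠ 0 ∧ |s| < δ := fun s hs => hL s (List.mem_cons_of_mem t hs)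
  have hnear : ∀ y ∈ uIcc x (x + t), |y| < 2 * δ := fun y hy => by
    have := abs_sub_left_of_mem_uIcc hy
    rw [add_sub_cancel_left] at this
    linarith [abs_sub_abs_le_abs_sub y x]
  have hsum : (l.map abs).sum ≤ n * δ := by
    simpa [hlen] using List.sum_le_card_nsmul (l.map abs) δ (by
      simpa using fun s hs => (hl s hs).2.le)
  simp only [Metric.mem_closedBall, dist_eq_norm, iterSlope_cons]
  refine norm_slope_sub_le ht0 (fun y hy => hasDerivAt_iterSlope l fun z hz => hdr ?_)
    fun y hy => ?_
  · have h1 := hnear y hy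
    have h2 : δ ≤ r / (n + 2) := (min_le_right _ _).trans (min_le_right _ _)
    rw [le_div_iff₀ (by positivity)] at h2
    rw [Real.dist_eq, sub_zero]
    linarith [abs_sub_abs_le_abs_sub z y]
  · have h3 : δ ≤ ρ₁ / 2 := (min_le_right _ _).trans (min_le_left _ _)
    simpa [dist_eq_norm] using hsub (l, y)
      ⟨⟨hlen, fun s hs => ⟨(hl s hs).1, (hl s hs).2.trans_le (min_le_left _ _)⟩⟩,
        by simpa [Real.dist_eq] using (hnear y hy).trans_le (by linarith)⟩

theorem tendsto_iterSlope_of_contDiffOn {n : ℕ} {g : ℝ → E} {U : Set ℝ} (hU : IsOpen U)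
    (h0 : 0 ∈ U) (hg : ContDiffOn ℝ n g U) :
    Tendsto (fun p : List ℝ × ℝ => iterSlope p.1 g p.2) (smallSteps n ×ˢ 𝓝 0)
      (𝓝 (iteratedDerivWithin n g U 0)) := by
  induction n generalizing g with
  | zero =>
    rw [iteratedDerivWithin_zero]
    refine ((hg.continuousOn.continuousAt (hU.mem_nhds h0)).tendsto.comp tendsto_snd).congr' ?_
    filter_upwards [eventually_eq_nil_smallSteps_zero.prod_inl (𝓝 0)] with p hp
    simp [hp]
  | succ n ih =>
    rw [iteratedDerivWithin_succ']
    refine tendsto_iterSlope_succ_of_hasDerivAt ?_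
      (ih (hg.derivWithin hU.uniqueDiffOn (by push_cast; rfl)))
    filter_upwards [hU.mem_nhds h0] with y hy
    exact ((hg.differentiableOn (by simp) y hy).hasDerivWithinAt).hasDerivAt (hU.mem_nhds hy)

lemma tendsto_of_tendsto_prod_of_tendsto {α β X : Type*} [TopologicalSpace X] [RegularSpace X]
    {la : Filter α} {lb : Filter β} [lb.NeBot] {F : α × β → X} {g : α → X} {c : X}
    (hF : Tendsto F (la ×ˢ lb) (𝓝 c)) (hg : ∀ a, Tendsto (fun b => F (a, b)) lb (𝓝 (g a))) :
    Tendsto g la (𝓝 c) := by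
  refine (closed_nhds_basis c).tendsto_right_iff.2 fun V ⟨hV, hVc⟩ => ?_
  obtain ⟨pa, hpa, pb, hpb, hF⟩ := eventually_prod_iff.1 (hF hV)
  filter_upwards [hpa] with a ha using hVc.mem_of_tendsto (hg a) (hpb.mono fun b hb => hF ha hb)

lemma uniformCauchySeqOn_of_eventually_dist_le {ι α β : Type*} [PseudoMetricSpace β]
    {F : ι → α → β} {p : Filter ι} {b : ι × ι → ℝ} (hb : Tendsto b (p ×ˢ p) (𝓝 0))
    (h : ∀ᶠ q in p ×ˢ p, ∀ x, dist (F q.1 x) (F q.2 x) ≤ b q) : UniformCauchySeqOn F p univ := by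
  intro u hu
  obtain ⟨ε, hε, hεu⟩ := Metric.mem_uniformity_dist.1 hu
  filter_upwards [h, hb.eventually (gt_mem_nhds hε)] with q hq hbq x _
  exact hεu ((hq x).trans_lt hbq)

lemma UniformCauchySeqOn.exists_tendstoUniformly {ι α β : Type*} [UniformSpace β] [CompleteSpace β]
    {F : ι → α → β} {p : Filter ι} [p.NeBot] (h : UniformCauchySeqOn F p univ) :
    ∃ G, TendstoUniformly F G p := by
  choose G hG using fun x => CompleteSpace.complete (h.cauchy_map (mem_univ x))
  exact ⟨G, tendstoUniformlyOn_univ.1 (h.tendstoUniformlyOn_of_tendsto fun x _ => hG x)⟩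

lemma eq_of_tendsto_iterSlope_smallSteps_zero {f G : ℝ → E}
    (hG : ∀ y, Tendsto (fun L => iterSlope L f y) (smallSteps 0) (𝓝 (G y))) : G = f :=
  funext fun y => tendsto_nhds_unique (hG y) <| tendsto_const_nhds.congr' <|
    eventually_eq_nil_smallSteps_zero.mono fun L hL => by simp [hL]

theorem hasDerivAt_of_tendsto_iterSlope {f G : ℝ → E} {G' : E} {m : ℕ} {x : ℝ}
    (hG : ∀ y, Tendsto (fun L => iterSlope L f y) (smallSteps m) (𝓝 (G y)))
    (hG' : Tendsto (fun L => iterSlope L f x) (smallSteps (m + 1)) (𝓝 G')) :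
    HasDerivAt G G' x := by
  rw [hasDerivAt_iff_tendsto_slope_zero]
  exact tendsto_of_tendsto_prod_of_tendsto (hG'.comp (tendsto_cons_smallSteps m)) fun t =>
    ((hG (x + t)).sub (hG x)).const_smul t⁻¹

theorem contDiff_of_forall_hasDerivAt {n : ℕ} {g : ℕ → ℝ → E}
    (hd : ∀ j < n, ∀ x, HasDerivAt (g j) (g (j + 1) x) x) (hc : Continuous (g n)) :
    ContDiff ℝ n (g 0) := by
  have hiter : ∀ j ≤ n, iteratedDeriv j (g 0) = g j := by
    intro j hj
    induction j with
    | zero => exact iteratedDeriv_zero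
    | succ j ih =>
      rw [iteratedDeriv_succ, ih (by omega)]
      exact funext fun x => (hd j (by omega) x).deriv
  rw [contDiff_nat_iff_iteratedDeriv]
  refine ⟨fun j hj => ?_, fun j hj => ?_⟩
  · rw [hiter j hj]
    rcases hj.lt_or_eq with hj | rfl
    exacts [continuous_iff_continuousAt.2 fun x => (hd j hj x).continuousAt, hc]
  · rw [hiter j hj.le]
    exact fun x => (hd j hj x).differentiableAt

section InnerProduct

variable {𝕜 F : Type*} [RCLike 𝕜] [SeminormedAddCommGroup F] [InnerProductSpace 𝕜 F]

lemma norm_inner_sub_inner_le (a b a' b' : F) :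
    ‖⟪a, b⟫_𝕜 - ⟪a', b'⟫_𝕜‖ ≤ ‖a - a'‖ * ‖b‖ + ‖a'‖ * ‖b - b'‖ := by
  calc ‖⟪a, b⟫_𝕜 - ⟪a', b'⟫_𝕜‖ = ‖⟪a - a', b⟫_𝕜 + ⟪a', b - b'⟫_𝕜‖ := by
        rw [inner_sub_left, inner_sub_right]; ring_nf
    _ ≤ ‖a - a'‖ * ‖b‖ + ‖a'‖ * ‖b - b'‖ :=
        (norm_add_le _ _).trans (add_le_add (norm_inner_le_norm _ _) (norm_inner_le_norm _ _))

variable {ι : Type*} {l : Filter ι} {v : ι → F} {c : 𝕜}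

lemma tendsto_norm_of_tendsto_inner
    (h : Tendsto (fun p : ι × ι => ⟪v p.1, v p.2⟫_𝕜) (l ×ˢ l) (𝓝 c)) :
    Tendsto (fun i => ‖v i‖) l (𝓝 √(RCLike.re c)) := by
  simpa only [Function.comp_def, Function.diag, ← norm_eq_sqrt_re_inner] using
    ((RCLike.continuous_re.tendsto c).comp (h.comp tendsto_diag)).sqrt

lemma tendsto_norm_sub_of_tendsto_inner
    (h : Tendsto (fun p : ι × ι => ⟪v p.1, v p.2⟫_𝕜) (l ×ˢ l) (𝓝 c)) :
    Tendsto (fun p : ι × ι => ‖v p.1 - v p.2‖) (l ×ˢ l) (𝓝 0) := by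
  have hre {g : ι × ι → ι × ι} (hg : Tendsto g (l ×ˢ l) (l ×ˢ l)) :
      Tendsto (fun p => RCLike.re ⟪v (g p).1, v (g p).2⟫_𝕜) (l ×ˢ l) (𝓝 (RCLike.re c)) :=
    (RCLike.continuous_re.tendsto c).comp (h.comp hg)
  have hsq : Tendsto (fun p : ι × ι => ‖v p.1 - v p.2‖ ^ 2) (l ×ˢ l) (𝓝 0) := by
    have := ((hre (tendsto_fst.prodMk tendsto_fst)).sub (((RCLike.continuous_re.tendsto c).comp
      h).const_mul 2)).add (hre (tendsto_snd.prodMk tendsto_snd))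
    rw [show RCLike.re c - 2 * RCLike.re c + RCLike.re c = 0 by ring] at this
    refine this.congr fun p => ?_
    simp only [Function.comp_apply, @norm_sub_sq 𝕜, @norm_sq_eq_re_inner 𝕜]
  simpa using hsq.sqrt

end InnerProduct

namespace IsPosDefFun

variable {f : ℝ → ℂ}

lemma sum_fintype_nonneg (hf : IsPosDefFun f) {ι : Type*} [Fintype ι] (x : ι → ℝ) (ξ : ι → ℂ) :
    0 ≤ ∑ k, ∑ l, f (x k - x l) * ξ k * conj (ξ l) := by
  have h := hf _ (x ∘ (Fintype.equivFin ι).symm) (ξ ∘ (Fintype.equivFin ι).symm)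
  rw [← (Fintype.equivFin ι).symm.sum_comp]
  simp_rw [← (Fintype.equivFin ι).symm.sum_comp (fun l => f (_ - x l) * _ * conj (ξ l))]
  exact h

lemma sum_finset_nonneg (hf : IsPosDefFun f) (s : Finset ℝ) (ξ : ℝ → ℂ) :
    0 ≤ ∑ x ∈ s, ∑ y ∈ s, f (x - y) * ξ x * conj (ξ y) := by
  rw [← Finset.sum_coe_sort s]
  simp_rw [← Finset.sum_coe_sort s]
  exact hf.sum_fintype_nonneg (fun x : s => (x : ℝ)) (fun x => ξ x)

lemma map_neg (hf : IsPosDefFun f) (a : ℝ) : f (-a) = conj (f a) := by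
  have h0 : (f 0).im = 0 := by simpa using ((Complex.le_def.1 (hf 1 ![0] ![1])).2).symm
  have h1 := hf 2 ![0, a] ![1, 1]
  have h2 := hf 2 ![0, a] ![1, Complex.I]
  simp only [Fin.sum_univ_two, Matrix.cons_val_zero, Matrix.cons_val_one,
    sub_zero, zero_sub, sub_self, map_one, mul_one] at h1 h2
  have e1 := (Complex.le_def.1 h1).2
  have e2 := (Complex.le_def.1 h2).2
  rw [Complex.conj_I] at e2
  simp only [Complex.add_im, Complex.mul_im, Complex.mul_re, Complex.I_re, Complex.I_im,
    Complex.neg_im, Complex.neg_re, Complex.zero_im, h0] at e1 e2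
  apply Complex.ext <;> simp only [Complex.conj_re, Complex.conj_im] <;> linarith

end IsPosDefFun

def posDefInner (f : ℝ → ℂ) (ξ η : ℝ →₀ ℂ) : ℂ :=
  ξ.sum fun x a => η.sum fun y b => conj a * b * f (y - x)

section posDefInner

variable {f : ℝ → ℂ}

lemma posDefInner_add_left (ξ₁ ξ₂ η : ℝ →₀ ℂ) :
    posDefInner f (ξ₁ + ξ₂) η = posDefInner f ξ₁ η + posDefInner f ξ₂ η :=
  Finsupp.sum_add_index' (by simp) fun _ _ _ => by
    simp only [map_add, add_mul, Finsupp.sum_add]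

lemma posDefInner_smul_left (c : ℂ) (ξ η : ℝ →₀ ℂ) :
    posDefInner f (c • ξ) η = conj c * posDefInner f ξ η := by
  rw [posDefInner, Finsupp.sum_smul_index' (by simp), posDefInner, Finsupp.mul_sum]
  simp only [smul_eq_mul, map_mul, Finsupp.mul_sum, mul_assoc]

lemma conj_posDefInner (hf : IsPosDefFun f) (ξ η : ℝ →₀ ℂ) :
    conj (posDefInner f η ξ) = posDefInner f ξ η := by
  simp only [posDefInner, map_finsuppSum, map_mul, conj_conj, ← hf.map_neg, neg_sub]
  rw [Finsupp.sum_comm]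
  simp only [mul_comm]

lemma re_posDefInner_self_nonneg (hf : IsPosDefFun f) (ξ : ℝ →₀ ℂ) :
    0 ≤ (posDefInner f ξ ξ).re := by
  have h := hf.sum_finset_nonneg ξ.support ξ
  rw [Finset.sum_comm] at h
  simpa [posDefInner, Finsupp.sum, mul_comm, mul_left_comm] using (Complex.le_def.1 h).1

lemma posDefInner_single_single (a b : ℝ) (c d : ℂ) :
    posDefInner f (Finsupp.single a c) (Finsupp.single b d) = conj c * d * f (b - a) := by
  simp [posDefInner]

lemma posDefInner_mapDomain_add_right (t : ℝ) (ξ η : ℝ →₀ ℂ) :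
    posDefInner f (ξ.mapDomain (· + t)) (η.mapDomain (· + t)) = posDefInner f ξ η := by
  simp only [posDefInner, Finsupp.sum_mapDomain_index_inj (add_left_injective t),
    add_sub_add_right_eq_sub]

end posDefInner

/-- The pre-Hilbert space of `f`: finite combinations `ξ : ℝ →₀ ℂ` of Dirac masses `δ_x`, with
`⟪δ_x, δ_y⟫ = f (y - x)`. Translations act isometrically and `f x = ⟪δ₀, δₓ⟫`. -/
def PosDefSpace (_f : ℝ → ℂ) : Type := ℝ →₀ ℂ

namespace PosDefSpace

variable (f : ℝ → ℂ)

instance : AddCommGroup (PosDefSpace f) := inferInstanceAs (AddCommGroup (ℝ →₀ ℂ))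

instance : Module ℂ (PosDefSpace f) := inferInstanceAs (Module ℂ (ℝ →₀ ℂ))

abbrev innerCore [hf : Fact (IsPosDefFun f)] : PreInnerProductSpace.Core ℂ (PosDefSpace f) where
  inner := posDefInner f
  conj_inner_symm := conj_posDefInner hf.out
  re_inner_nonneg := re_posDefInner_self_nonneg hf.out
  add_left := posDefInner_add_left
  smul_left ξ η c := posDefInner_smul_left c ξ η

variable [Fact (IsPosDefFun f)]

instance : SeminormedAddCommGroup (PosDefSpace f) :=
  @InnerProductSpace.Core.toSeminormedAddCommGroup ℂ _ _ _ _ (innerCore f)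

instance : InnerProductSpace ℂ (PosDefSpace f) := InnerProductSpace.ofCore (innerCore f)

lemma inner_def (ξ η : PosDefSpace f) : ⟪ξ, η⟫_ℂ = posDefInner f ξ η := rfl

def delta (x : ℝ) : PosDefSpace f := Finsupp.single x 1

def shift (t : ℝ) : PosDefSpace f →ₗᵢ[ℂ] PosDefSpace f :=
  LinearMap.isometryOfInner (Finsupp.lmapDomain ℂ ℂ (· + t)) fun ξ η => by
    rw [inner_def, inner_def]
    exact posDefInner_mapDomain_add_right t ξ η

lemma inner_delta_delta (a b : ℝ) : ⟪delta f a, delta f b⟫_ℂ = f (b - a) :=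
  (posDefInner_single_single a b 1 1).trans (by simp)

lemma shift_shift (s t : ℝ) (ξ : PosDefSpace f) :
    shift f s (shift f t ξ) = shift f (s + t) ξ := by
  have key (v : ℝ →₀ ℂ) :
      (v.mapDomain (· + t)).mapDomain (· + s) = v.mapDomain (· + (s + t)) := by
    rw [← Finsupp.mapDomain_comp]
    congr 1
    funext x
    simp only [Function.comp_apply]; ring
  exact key ξ

lemma shift_zero (ξ : PosDefSpace f) : shift f 0 ξ = ξ := by
  have key (v : ℝ →₀ ℂ) : v.mapDomain (· + 0) = v := by
    simp only [add_zero]; exact Finsupp.mapDomain_id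
  exact key ξ

lemma shift_delta (t a : ℝ) : shift f t (delta f a) = delta f (a + t) :=
  Finsupp.mapDomain_single

lemma inner_delta_shift_delta (x : ℝ) : ⟪delta f 0, shift f x (delta f 0)⟫_ℂ = f x := by
  rw [shift_delta, inner_delta_delta, zero_add, sub_zero]

lemma inner_shift_left (s : ℝ) (ξ η : PosDefSpace f) :
    ⟪shift f s ξ, η⟫_ℂ = ⟪ξ, shift f (-s) η⟫_ℂ := by
  conv_lhs => rw [← shift_zero f η, ← add_neg_cancel s, ← shift_shift]
  exact (shift f s).inner_map_map ξ _

lemma norm_shift_delta_sub_sq (h : ℝ) :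
    ‖shift f h (delta f 0) - delta f 0‖ ^ 2 = 2 * ((f 0).re - (f h).re) := by
  have h0 : ‖delta f 0‖ ^ 2 = (f 0).re := by
    rw [@norm_sq_eq_re_inner ℂ, inner_delta_delta, sub_self, RCLike.re_to_complex]
  rw [@norm_sub_sq ℂ, LinearIsometry.norm_map, inner_re_symm, inner_delta_shift_delta, h0,
    RCLike.re_to_complex]
  ring

lemma continuous_shift_delta (h0 : ContinuousAt f 0) :
    Continuous fun x => shift f x (delta f 0) := by
  refine continuous_iff_continuousAt.2 fun x => ?_
  have hsq : Tendsto (fun y => ‖shift f (y - x) (delta f 0) - delta f 0‖ ^ 2) (𝓝 x) (𝓝 0) := by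
    simp only [norm_shift_delta_sub_sq]
    have : Tendsto (fun y => f (y - x)) (𝓝 x) (𝓝 (f 0)) :=
      h0.tendsto.comp (by simpa using (continuous_sub_right x).tendsto x)
    simpa using (Complex.continuous_re.tendsto _ |>.comp this).const_sub (f 0).re |>.const_mul 2
  rw [ContinuousAt, tendsto_iff_norm_sub_tendsto_zero]
  have hnorm : Tendsto (fun y => ‖shift f (y - x) (delta f 0) - delta f 0‖) (𝓝 x) (𝓝 0) := by
    simpa using hsq.sqrt
  refine hnorm.congr fun y => ?_
  rw [← LinearIsometry.norm_map (shift f x), map_sub, shift_shift, add_sub_cancel]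

def diffVec : List ℝ → PosDefSpace f
  | [] => delta f 0
  | t :: L => (t : ℂ)⁻¹ • (shift f t (diffVec L) - diffVec L)

lemma inner_shift_diffVec (ξ : PosDefSpace f) (Q : List ℝ) (x : ℝ) :
    ⟪ξ, shift f x (diffVec f Q)⟫_ℂ = iterSlope Q (fun y => ⟪ξ, shift f y (delta f 0)⟫_ℂ) x := by
  induction Q generalizing x with
  | nil => rfl
  | cons t Q ih =>
    simp only [diffVec, iterSlope_cons, map_smul, map_sub, inner_smul_right, inner_sub_right,
      shift_shift, ← ih, Complex.real_smul, Complex.ofReal_inv]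

lemma inner_diffVec_shift_delta (P : List ℝ) (y : ℝ) :
    ⟪diffVec f P, shift f y (delta f 0)⟫_ℂ = (-1) ^ P.length * iterSlope (P.map (-·)) f y := by
  induction P generalizing y with
  | nil => simpa [diffVec] using inner_delta_shift_delta f y
  | cons t P ih =>
    rw [diffVec, inner_smul_left, inner_sub_left, inner_shift_left, shift_shift, ih, ih,
      List.map_cons, List.length_cons, iterSlope_cons, neg_add_eq_sub, ← sub_eq_add_neg]
    simp only [Complex.real_smul, map_inv₀, Complex.conj_ofReal, Complex.ofReal_inv,
      Complex.ofReal_neg]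
    ring

lemma inner_diffVec_shift_diffVec (P Q : List ℝ) (x : ℝ) :
    ⟪diffVec f P, shift f x (diffVec f Q)⟫_ℂ =
      (-1) ^ P.length * iterSlope (Q ++ P.map (-·)) f x := by
  have h := iterSlope_const_smul ((-1 : ℂ) ^ P.length) Q (iterSlope (P.map (-·)) f)
  simp only [smul_eq_mul] at h
  simp only [inner_shift_diffVec, inner_diffVec_shift_delta, h, iterSlope_append]

lemma iterSlope_eq_inner_diffVec (L : List ℝ) (a : ℕ) (x : ℝ) :
    iterSlope L f x = (-1) ^ (L.drop a).length *
      ⟪diffVec f ((L.drop a).map (-·)), shift f x (diffVec f (L.take a))⟫_ℂ := by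
  rw [inner_diffVec_shift_diffVec, List.length_map, ← mul_assoc, ← mul_pow, neg_one_mul, neg_neg,
    one_pow, one_mul, List.map_map]
  simp

variable {f} {U : Set ℝ}

lemma tendsto_inner_diffVec (hU : IsOpen U) (h0 : 0 ∈ U) {j : ℕ}
    (hf : ContDiffOn ℝ (j + j : ℕ) f U) :
    Tendsto (fun p : List ℝ × List ℝ => ⟪diffVec f p.1, diffVec f p.2⟫_ℂ)
      (smallSteps j ×ˢ smallSteps j) (𝓝 ((-1) ^ j * iteratedDerivWithin (j + j) f U 0)) := by
  have hsteps : Tendsto (fun p : List ℝ × List ℝ => (p.2 ++ p.1.map (-·), (0 : ℝ)))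
      (smallSteps j ×ˢ smallSteps j) (smallSteps (j + j) ×ˢ 𝓝 0) :=
    ((tendsto_append_smallSteps j j).comp (tendsto_snd.prodMk
      ((tendsto_map_neg_smallSteps j).comp tendsto_fst))).prodMk tendsto_const_nhds
  refine (((tendsto_iterSlope_of_contDiffOn hU h0 hf).comp hsteps).const_mul _).congr' ?_
  filter_upwards [(eventually_length_smallSteps j).prod_inl _] with p hp
  rw [Function.comp_apply, ← shift_zero f (diffVec f p.2), inner_diffVec_shift_diffVec, hp]

theorem uniformCauchySeqOn_iterSlope (hU : IsOpen U) (h0 : 0 ∈ U) {k : ℕ}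
    (hf : ContDiffOn ℝ (2 * k : ℕ) f U) {a b : ℕ} (ha : a ≤ k) (hb : b ≤ k) :
    UniformCauchySeqOn (fun L => iterSlope L f) (smallSteps (a + b)) univ := by
  have hu := tendsto_inner_diffVec hU h0 (hf.of_le (by exact_mod_cast (by omega : b + b ≤ 2 * k)))
  have hv := tendsto_inner_diffVec hU h0 (hf.of_le (by exact_mod_cast (by omega : a + a ≤ 2 * k)))
  have hdrop : Tendsto (fun L => (L.drop a).map (-·)) (smallSteps (a + b)) (smallSteps b) :=
    (tendsto_map_neg_smallSteps b).comp (tendsto_drop_smallSteps a b)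
  have htake := tendsto_take_smallSteps a b
  have hbound := ((tendsto_norm_sub_of_tendsto_inner hu).comp (hdrop.prodMap hdrop)).mul
    ((tendsto_norm_of_tendsto_inner hv).comp (htake.comp tendsto_fst)) |>.add <|
    ((tendsto_norm_of_tendsto_inner hu).comp (hdrop.comp tendsto_snd)).mul
    ((tendsto_norm_sub_of_tendsto_inner hv).comp (htake.prodMap htake))
  rw [zero_mul, mul_zero, add_zero] at hbound
  refine uniformCauchySeqOn_of_eventually_dist_le hbound ?_
  filter_upwards [(eventually_length_smallSteps _).prod_mk (eventually_length_smallSteps _)]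
    with ⟨L, L'⟩ ⟨hL, hL'⟩ x
  rw [dist_eq_norm, iterSlope_eq_inner_diffVec f L a, iterSlope_eq_inner_diffVec f L' a,
    List.length_drop, List.length_drop, hL, hL', ← mul_sub, norm_mul, norm_pow, norm_neg,
    norm_one, one_pow, one_mul]
  refine (norm_inner_sub_inner_le _ _ _ _).trans_eq ?_
  simp only [Function.comp_apply, Prod.map, ← map_sub, LinearIsometry.norm_map]

end PosDefSpace

theorem IsPosDefFun.continuous {f : ℝ → ℂ} (hf : IsPosDefFun f) (h0 : ContinuousAt f 0) :
    Continuous f := by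
  have : Fact (IsPosDefFun f) := ⟨hf⟩
  simpa only [PosDefSpace.inner_delta_shift_delta] using
    (continuous_const (y := PosDefSpace.delta f 0)).inner (𝕜 := ℂ)
      (PosDefSpace.continuous_shift_delta f h0)

/-- If a positive definite function `f : ℝ → ℂ` is `C^{2k}` on an open neighborhood of the
origin, then it is `C^{2k}` on all of `ℝ`. -/
theorem stmt0 (f : ℝ → ℂ) (hpd : IsPosDefFun f) (k : ℕ)
    (U : Set ℝ) (hU : IsOpen U) (h0 : (0 : ℝ) ∈ U)
    (hf : ContDiffOn ℝ (2 * k : ℕ) f U) :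
    ContDiff ℝ (2 * k : ℕ) f := by
  have : Fact (IsPosDefFun f) := ⟨hpd⟩
  have hlim (m : ℕ) (hm : m ≤ 2 * k) :
      ∃ G : ℝ → ℂ, TendstoUniformly (fun L => iterSlope L f) G (smallSteps m) := by
    obtain ⟨a, b, ha, hb, rfl⟩ : ∃ a b, a ≤ k ∧ b ≤ k ∧ a + b = m :=
      ⟨m / 2, m - m / 2, by omega, by omega, by omega⟩
    exact (PosDefSpace.uniformCauchySeqOn_iterSlope hU h0 hf ha hb).exists_tendstoUniformly
  choose! G hG using hlim
  have hcont : Continuous f := hpd.continuous (hf.continuousOn.continuousAt (hU.mem_nhds h0))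
  rw [← eq_of_tendsto_iterSlope_smallSteps_zero fun x => (hG 0 (Nat.zero_le _)).tendsto_at x]
  refine contDiff_of_forall_hasDerivAt (fun j hj x => ?_) <|
    (hG (2 * k) le_rfl).continuous (Frequently.of_forall fun L => continuous_iterSlope hcont L)
  exact hasDerivAt_of_tendsto_iterSlope (fun y => (hG j hj.le).tendsto_at y)
    ((hG (j + 1) hj).tendsto_at x)
end
end

section
/- Let a < b be extended reals and let G : (a,b) → ℝ be continuous and co-positive definite on (a,b), with μ the nonnegative Borel measure on ℝ satisfying G(y) = ∫ℝ e^{−yt} dμ(t) for y ∈ (a,b). Then the function g(z) = ∫ℝ e^{−zt} dμ(t) is well defined and holomorphic on the vertical strip T_{a,b}, satisfies g(y) = G(y) for real y ∈ (a,b), is co-positive definite on T_{a,b}, and for every n ≥ 1 and z ∈ T_{a,b} its n-th derivative satisfies g⁽ⁿ⁾(z) = ∫ℝ (−t)ⁿ e^{−zt} dμ(t). -/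
open Complex MeasureTheory Filter Set Topology
open scoped Real BigOperators ComplexOrder

noncomputable section

open ProbabilityTheory ComplexConjugate

/-!
With `X t = -t`, the function `g(z) = ∫ e^{-zt} dμ(t)` is the complex moment generating function
of `X` under `μ`. The representation of `G` puts `(a,b)`, an open set, inside the interval of
exponential integrability of `X`, hence inside its interior; holomorphy and the formula for the
derivatives on `T_{a,b}` are then the corresponding facts about `complexMGF`. Co-positive
definiteness holds pointwise under the integral:
`∑ₖₗ e^{-(zₖ + z̄ₗ)t} ξₖ ξ̄ₗ = |∑ₖ e^{-zₖt} ξₖ|²`.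
-/

lemma complexMGF_neg_eq_integral (μ : Measure ℝ) :
    complexMGF (fun t => -t) μ = fun z => ∫ t : ℝ, cexp (-z * t) ∂μ := by
  ext z
  simp only [complexMGF, ofReal_neg, mul_neg, neg_mul]

lemma isOpen_setOf_ereal_lt_coe_lt (a b : EReal) :
    IsOpen {y : ℝ | a < (y : EReal) ∧ (y : EReal) < b} :=
  isOpen_Ioo.preimage continuous_coe_real_ereal

lemma subset_interior_integrableExpSet_neg {μ : Measure ℝ} {I : Set ℝ} (hI : IsOpen I)
    (h : ∀ y ∈ I, Integrable (fun t : ℝ => Real.exp (-y * t)) μ) :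
    I ⊆ interior (integrableExpSet (fun t => -t) μ) :=
  hI.subset_interior_iff.2 fun y hy => by
    show Integrable (fun t : ℝ => Real.exp (y * -t)) μ
    simpa only [mul_neg, neg_mul] using h y hy

lemma integral_cexp_neg_ofReal_mul (μ : Measure ℝ) (y : ℝ) :
    ∫ t : ℝ, cexp (-(y : ℂ) * t) ∂μ = ((∫ t : ℝ, Real.exp (-y * t) ∂μ : ℝ) : ℂ) := by
  rw [← integral_complex_ofReal]
  push_cast
  rfl

lemma sum_sum_cexp_mul_eq_normSq {n : ℕ} (z : Fin n → ℂ) (ξ : Fin n → ℂ) (t : ℝ) :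
    ∑ k, ∑ l, cexp (-(z k + conj (z l)) * t) * (ξ k * conj (ξ l)) =
      ((normSq (∑ k, cexp (-z k * t) * ξ k) : ℝ) : ℂ) := by
  rw [← mul_conj, map_sum, Finset.sum_mul_sum]
  refine Finset.sum_congr rfl fun k _ => Finset.sum_congr rfl fun l _ => ?_
  have harg : -(z k + conj (z l)) * t = -z k * t + conj (-z l * t) := by
    rw [map_mul, map_neg, conj_ofReal]
    ring
  rw [map_mul, harg, Complex.exp_add, ← Complex.exp_conj]
  ring

lemma isCoPosDefOnC_integral_cexp_neg_mul {μ : Measure ℝ} {T : Set ℂ}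
    (hT : ∀ z ∈ T, Integrable (fun t : ℝ => cexp (-z * t)) μ) :
    IsCoPosDefOnC (fun z => ∫ t : ℝ, cexp (-z * t) ∂μ) T := by
  intro n z hz ξ
  have hint : ∀ k l, Integrable
      (fun t : ℝ => cexp (-(z k + conj (z l)) * t) * (ξ k * conj (ξ l))) μ :=
    fun k l => (hT _ (hz k l)).mul_const _
  calc (0 : ℂ) ≤ ((∫ t : ℝ, normSq (∑ k, cexp (-z k * t) * ξ k) ∂μ : ℝ) : ℂ) :=
        zero_le_real.2 (integral_nonneg fun t => normSq_nonneg _)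
    _ = ∫ t : ℝ, ∑ k, ∑ l, cexp (-(z k + conj (z l)) * t) * (ξ k * conj (ξ l)) ∂μ := by
        simp only [sum_sum_cexp_mul_eq_normSq, integral_complex_ofReal]
    _ = ∑ k, ∑ l, (∫ t : ℝ, cexp (-(z k + conj (z l)) * t) ∂μ) * ξ k * conj (ξ l) := by
        rw [integral_finsetSum _ fun k _ => integrable_finsetSum _ fun l _ => hint k l]
        refine Finset.sum_congr rfl fun k _ => ?_
        rw [integral_finsetSum _ fun l _ => hint k l]
        refine Finset.sum_congr rfl fun l _ => ?_
        rw [integral_mul_const, mul_assoc]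

theorem stmt3_general (a b : EReal) (G : ℝ → ℝ) (μ : Measure ℝ)
    (hrep : ∀ y : ℝ, a < (y : EReal) → (y : EReal) < b →
      Integrable (fun t : ℝ => Real.exp (-y * t)) μ ∧
      G y = ∫ t : ℝ, Real.exp (-y * t) ∂μ) :
    (∀ z ∈ VStrip a b, Integrable (fun t : ℝ => Complex.exp (-z * t)) μ) ∧
    DifferentiableOn ℂ (fun z => ∫ t : ℝ, Complex.exp (-z * t) ∂μ) (VStrip a b) ∧
    (∀ y : ℝ, a < (y : EReal) → (y : EReal) < b →
      (∫ t : ℝ, Complex.exp (-(y : ℂ) * t) ∂μ) = (G y : ℂ)) ∧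
    IsCoPosDefOnC (fun z => ∫ t : ℝ, Complex.exp (-z * t) ∂μ) (VStrip a b) ∧
    (∀ n : ℕ, 1 ≤ n → ∀ z ∈ VStrip a b,
      iteratedDeriv n (fun z => ∫ t : ℝ, Complex.exp (-z * t) ∂μ) z =
        ∫ t : ℝ, (-t : ℂ) ^ n * Complex.exp (-z * t) ∂μ) := by
  have hstrip : ∀ z ∈ VStrip a b, z.re ∈ interior (integrableExpSet (fun t => -t) μ) :=
    fun z hz => subset_interior_integrableExpSet_neg (isOpen_setOf_ereal_lt_coe_lt a b)
      (fun y hy => (hrep y hy.1 hy.2).1) hz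
  have hint : ∀ z ∈ VStrip a b, Integrable (fun t : ℝ => cexp (-z * t)) μ := fun z hz => by
    simpa only [ofReal_neg, mul_neg, neg_mul] using
      integrable_cexp_mul_of_re_mem_interior_integrableExpSet (hstrip z hz)
  refine ⟨hint, ?_, fun y hy₁ hy₂ => ?_, isCoPosDefOnC_integral_cexp_neg_mul hint,
    fun n _ z hz => ?_⟩
  · rw [← complexMGF_neg_eq_integral]
    exact differentiableOn_complexMGF.mono hstrip
  · rw [integral_cexp_neg_ofReal_mul, (hrep y hy₁ hy₂).2]
  · rw [← complexMGF_neg_eq_integral, iteratedDeriv_complexMGF (hstrip z hz)]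
    simp only [ofReal_neg, mul_neg, neg_mul]

/-- The Widder representation of a continuous co-positive definite `G` on `(a,b)` extends to a
holomorphic, co-positive definite function `g(z) = ∫ e^{-zt} dμ(t)` on the vertical strip
`T_{a,b}`, whose derivatives are obtained by differentiating under the integral sign. -/
theorem stmt3 (a b : EReal) (hab : a < b) (G : ℝ → ℝ) (μ : Measure ℝ)
    (hcont : ContinuousOn G {y : ℝ | a < (y : EReal) ∧ (y : EReal) < b})
    (hcpd : IsCoPosDefOnR (fun x => (G x : ℂ)) {y : ℝ | a < (y : EReal) ∧ (y : EReal) < b})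
    (hrep : ∀ y : ℝ, a < (y : EReal) → (y : EReal) < b →
      Integrable (fun t : ℝ => Real.exp (-y * t)) μ ∧
      G y = ∫ t : ℝ, Real.exp (-y * t) ∂μ) :
    (∀ z ∈ VStrip a b, Integrable (fun t : ℝ => Complex.exp (-z * t)) μ) ∧
    DifferentiableOn ℂ (fun z => ∫ t : ℝ, Complex.exp (-z * t) ∂μ) (VStrip a b) ∧
    (∀ y : ℝ, a < (y : EReal) → (y : EReal) < b →
      (∫ t : ℝ, Complex.exp (-(y : ℂ) * t) ∂μ) = (G y : ℂ)) ∧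
    IsCoPosDefOnC (fun z => ∫ t : ℝ, Complex.exp (-z * t) ∂μ) (VStrip a b) ∧
    (∀ n : ℕ, 1 ≤ n → ∀ z ∈ VStrip a b,
      iteratedDeriv n (fun z => ∫ t : ℝ, Complex.exp (-z * t) ∂μ) z =
        ∫ t : ℝ, (-t : ℂ) ^ n * Complex.exp (-z * t) ∂μ) :=
  stmt3_general a b G μ hrep
end
end

section
/- Let f be positive definite on a set S ⊆ ℂ, and let x, y, β ∈ ℝ be such that x + iy ∈ S, −x + iy ∈ S, i(y − β) ∈ S and i(y + β) ∈ S. Then f(i(y−β)) and f(i(y+β)) are nonnegative real numbers and |f(x+iy)|² ≤ f(i(y−β)) · f(i(y+β)). -/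
open Complex MeasureTheory Filter Set Topology
open scoped Real BigOperators ComplexOrder

noncomputable section

/-! For `z₀ = x + i(y - β)/2` and `z₁ = i(y + β)/2`, positive definiteness makes the matrix
`(f (z_k - conj z_l))_{k,l ≤ 1}` positive semidefinite. Its diagonal entries are `f(i(y ∓ β))` and
its off-diagonal entries `f(±x + iy)`, so the inequality is the nonnegativity of its determinant. -/

open scoped InnerProductSpace

namespace Matrix

theorem posSemidef_of_forall_dotProduct_mulVec_nonneg {n : Type*} [Fintype n]
    {M : Matrix n n ℂ} (hM : ∀ x, 0 ≤ star x ⬝ᵥ (M *ᵥ x)) : M.PosSemidef := by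
  classical
  rw [← isPositive_toEuclideanLin_iff, LinearMap.isPositive_iff_complex]
  intro x
  have hx : ⟪M.toEuclideanLin x, x⟫_ℂ = star x.ofLp ⬝ᵥ (M *ᵥ x.ofLp) := by
    rw [← (IsSelfAdjoint.of_nonneg (hM x.ofLp)).star_eq]
    simp [EuclideanSpace.inner_eq_star_dotProduct, dotProduct_star, dotProduct_comm (M *ᵥ _)]
  rw [hx]
  obtain ⟨hre, him⟩ := RCLike.nonneg_iff.mp (hM x.ofLp)
  exact ⟨RCLike.conj_eq_iff_re.mp (RCLike.conj_eq_iff_im.mpr him), hre⟩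

theorem PosSemidef.norm_sq_le_re_mul_re {n 𝕜 : Type*} [Fintype n] [RCLike 𝕜]
    {M : Matrix n n 𝕜} (hM : M.PosSemidef) (i j : n) :
    ‖M i j‖ ^ 2 ≤ RCLike.re (M i i) * RCLike.re (M j j) := by
  have hdet := (hM.submatrix ![i, j]).det_nonneg
  rw [det_fin_two] at hdet
  simp only [submatrix_apply, cons_val_zero, cons_val_one] at hdet
  rw [← hM.isHermitian.apply j i, ← hM.isHermitian.coe_re_apply_self i,
    ← hM.isHermitian.coe_re_apply_self j, RCLike.star_def, RCLike.mul_conj] at hdet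
  exact sub_nonneg.mp (mod_cast hdet)

end Matrix

theorem IsPosDefOnC.posSemidef {f : ℂ → ℂ} {S : Set ℂ} (hf : IsPosDefOnC f S) {n : ℕ}
    {z : Fin n → ℂ} (hz : ∀ k l, z k - starRingEnd ℂ (z l) ∈ S) :
    (Matrix.of fun k l ↦ f (z k - starRingEnd ℂ (z l))).PosSemidef := by
  refine Matrix.posSemidef_of_forall_dotProduct_mulVec_nonneg fun ξ ↦ ?_
  convert hf n z hz (star ξ) using 1
  simp only [dotProduct, Matrix.mulVec, Finset.mul_sum]
  refine Finset.sum_congr rfl fun k _ ↦ Finset.sum_congr rfl fun l _ ↦ ?_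
  simp only [Matrix.of_apply, Pi.star_apply, starRingEnd_apply, star_star]
  ring

/-- Basic inequality for a positive definite function on `S ⊆ ℂ`:
`|f(x+iy)|² ≤ f(i(y-β)) f(i(y+β))`, the two right-hand factors being nonnegative reals. -/
theorem stmt5 (S : Set ℂ) (f : ℂ → ℂ) (hpd : IsPosDefOnC f S) (x y β : ℝ)
    (h1 : (x : ℂ) + (y : ℂ) * I ∈ S) (h2 : -(x : ℂ) + (y : ℂ) * I ∈ S)
    (h3 : ((y - β : ℝ) : ℂ) * I ∈ S) (h4 : ((y + β : ℝ) : ℂ) * I ∈ S) :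
    0 ≤ f (((y - β : ℝ) : ℂ) * I) ∧ 0 ≤ f (((y + β : ℝ) : ℂ) * I) ∧
    ‖f ((x : ℂ) + (y : ℂ) * I)‖ ^ 2 ≤
      (f (((y - β : ℝ) : ℂ) * I)).re * (f (((y + β : ℝ) : ℂ) * I)).re := by
  set z : Fin 2 → ℂ := ![x + (y - β) / 2 * I, (y + β) / 2 * I]
  obtain ⟨h00, h01, h10, h11⟩ :
      z 0 - starRingEnd ℂ (z 0) = ((y - β : ℝ) : ℂ) * I ∧
      z 0 - starRingEnd ℂ (z 1) = x + y * I ∧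
      z 1 - starRingEnd ℂ (z 0) = -x + y * I ∧
      z 1 - starRingEnd ℂ (z 1) = ((y + β : ℝ) : ℂ) * I := by
    refine ⟨?_, ?_, ?_, ?_⟩ <;>
    · simp only [z, Matrix.cons_val_zero, Matrix.cons_val_one, Matrix.cons_val_fin_one, map_add,
        map_sub, map_mul, map_div₀, map_ofNat, conj_ofReal, conj_I]
      push_cast
      ring
  have hM := hpd.posSemidef (z := z) <| by
    simp only [Fin.forall_fin_two, h00, h01, h10, h11]
    exact ⟨⟨h3, h1⟩, h2, h4⟩
  refine ⟨?_, ?_, ?_⟩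
  · simpa [h00] using hM.diag_nonneg (i := 0)
  · simpa [h11] using hM.diag_nonneg (i := 1)
  · simpa [h00, h01, h11] using hM.norm_sq_le_re_mul_re 0 1
end
end

section
/- The function f(z) = 1/(1+z²) satisfies, for every z in the horizontal strip S_{−1,1}, the representation f(z) = (1/2) ∫ℝ e^{izt} e^{−|t|} dt; moreover f is positive definite on S_{−1,1} and negative definite on each of the half-planes S_{1,+∞} = {z : Im z > 1} and S_{−∞,−1} = {z : Im z < −1}. -/
open Complex MeasureTheory Filter Set Topology
open scoped Real BigOperators ComplexOrder

noncomputable section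

/-! For real `t`, `exp (i (z - conj u) t) = exp (i z t) * conj (exp (i u t))`, so every
superposition `z ↦ ∫ exp (i z t) w(t) dμ(t)` with `w ≥ 0` is positive definite: its Hermitian
form is `∫ |∑ ξₖ exp (i zₖ t)|² w(t) dμ(t)`. Splitting Laplace integrals at `0` gives
`1 / (1 + z²) = ∫ exp (i z t) e^{-|t|} / 2 dt` for `|Im z| < 1` and
`-1 / (1 + z²) = ∫₀^∞ exp (i z t) sinh t dt` for `Im z > 1`; the lower half-plane follows by
`z ↦ -z`. -/

open ComplexConjugate

lemma HStrip_neg (a b : EReal) : -HStrip a b = HStrip (-b) (-a) := by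
  ext z
  simp only [HStrip, Set.mem_neg, Set.mem_ofPred_eq, Complex.neg_im, EReal.coe_neg,
    EReal.lt_neg_comm, EReal.neg_lt_comm]
  exact and_comm

lemma mem_HStrip_neg_one_one {z : ℂ} : z ∈ HStrip (-1) 1 ↔ -1 < z.im ∧ z.im < 1 := by
  rw [HStrip, Set.mem_ofPred_eq, ← EReal.coe_one, ← EReal.coe_neg, EReal.coe_lt_coe_iff,
    EReal.coe_lt_coe_iff]

lemma mem_HStrip_one_top {z : ℂ} : z ∈ HStrip 1 ⊤ ↔ 1 < z.im := by
  rw [HStrip, Set.mem_ofPred_eq, ← EReal.coe_one, EReal.coe_lt_coe_iff]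
  exact and_iff_left (EReal.coe_lt_top _)

lemma IsPosDefOnC.comp_neg {f : ℂ → ℂ} {S : Set ℂ} (hf : IsPosDefOnC f S) :
    IsPosDefOnC (fun z => f (-z)) (-S) := by
  intro n z hz ξ
  have hneg : ∀ k l, -z k - conj (-z l) = -(z k - conj (z l)) := fun k l => by
    rw [map_neg]; ring
  have hz' : ∀ k l, (-z) k - conj ((-z) l) ∈ S := fun k l => by
    simpa only [Pi.neg_apply, hneg] using Set.mem_neg.mp (hz k l)
  simpa only [Pi.neg_apply, hneg] using hf n (-z) hz' ξ

lemma sum_sum_mul_conj {ι : Type*} (s : Finset ι) (a : ι → ℂ) :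
    ∑ k ∈ s, ∑ l ∈ s, a k * conj (a l) = (normSq (∑ k ∈ s, a k) : ℂ) := by
  rw [← mul_conj, map_sum, Finset.sum_mul_sum]

theorem isPosDefOnC_of_eq_integral {μ : Measure ℝ} {w : ℝ → ℝ} (hw : 0 ≤ᵐ[μ] w)
    {F : ℂ → ℂ} {S : Set ℂ}
    (hint : ∀ z ∈ S, Integrable (fun t : ℝ => cexp (I * z * t) * w t) μ)
    (hF : ∀ z ∈ S, F z = ∫ t, cexp (I * z * t) * w t ∂μ) : IsPosDefOnC F S := by
  intro n z hz ξ
  have hfactor : ∀ k l (t : ℝ), cexp (I * (z k - conj (z l)) * t) * w t * ξ k * conj (ξ l) =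
      (ξ k * cexp (I * z k * t)) * conj (ξ l * cexp (I * z l * t)) * w t := fun k l t => by
    rw [map_mul, ← exp_conj, map_mul, map_mul, conj_I, conj_ofReal,
      show I * (z k - conj (z l)) * t = I * z k * t + -I * conj (z l) * t by ring, exp_add]
    ring
  have hint' : ∀ k l, Integrable
      (fun t : ℝ => cexp (I * (z k - conj (z l)) * t) * w t * ξ k * conj (ξ l)) μ :=
    fun k l => ((hint _ (hz k l)).mul_const _).mul_const _
  have hform : ∑ k, ∑ l, F (z k - conj (z l)) * ξ k * conj (ξ l) =
      ∫ t, ((normSq (∑ k, ξ k * cexp (I * z k * t)) * w t : ℝ) : ℂ) ∂μ := by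
    simp_rw [ofReal_mul, ← sum_sum_mul_conj, Finset.sum_mul, ← hfactor]
    rw [integral_finsetSum _ fun k _ => integrable_finsetSum _ fun l _ => hint' k l]
    refine Finset.sum_congr rfl fun k _ => ?_
    rw [integral_finsetSum _ fun l _ => hint' k l]
    refine Finset.sum_congr rfl fun l _ => ?_
    rw [hF _ (hz k l), integral_mul_const, integral_mul_const]
  rw [hform, integral_complex_ofReal]
  exact zero_le_real.mpr
    (integral_nonneg_of_ae (hw.mono fun t ht => mul_nonneg (normSq_nonneg _) ht))

lemma re_I_mul_add_one (z : ℂ) : (I * z + 1).re = 1 - z.im := by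
  simp only [add_re, mul_re, I_re, I_im, one_re]
  ring

lemma re_I_mul_sub_one (z : ℂ) : (I * z - 1).re = -z.im - 1 := by simp

lemma ne_zero_of_re_ne_zero {w : ℂ} (h : w.re ≠ 0) : w ≠ 0 := fun hw => h (by rw [hw, zero_re])

lemma one_add_sq_eq (z : ℂ) : 1 + z ^ 2 = -((I * z + 1) * (I * z - 1)) := by
  linear_combination z ^ 2 * I_sq

lemma cexp_I_mul_mul_exp_neg_abs_of_nonpos (z : ℂ) {t : ℝ} (ht : t ≤ 0) :
    cexp (I * z * t) * Real.exp (-|t|) = cexp ((I * z + 1) * t) := by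
  rw [abs_of_nonpos ht, neg_neg, ofReal_exp, ← exp_add]
  ring_nf

lemma cexp_I_mul_mul_exp_neg_abs_of_pos (z : ℂ) {t : ℝ} (ht : 0 < t) :
    cexp (I * z * t) * Real.exp (-|t|) = cexp ((I * z - 1) * t) := by
  rw [abs_of_pos ht, ofReal_exp, ← exp_add]
  push_cast
  ring_nf

lemma integrableOn_Iic_cexp_I_mul_mul_exp_neg_abs {z : ℂ} (h : z.im < 1) :
    IntegrableOn (fun t : ℝ => cexp (I * z * t) * Real.exp (-|t|)) (Iic 0) :=
  (integrableOn_exp_mul_complex_Iic (by rw [re_I_mul_add_one]; linarith) 0).congr_fun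
    (fun _ ht => (cexp_I_mul_mul_exp_neg_abs_of_nonpos z ht).symm) measurableSet_Iic

lemma integrableOn_Ioi_cexp_I_mul_mul_exp_neg_abs {z : ℂ} (h : -1 < z.im) :
    IntegrableOn (fun t : ℝ => cexp (I * z * t) * Real.exp (-|t|)) (Ioi 0) :=
  (integrableOn_exp_mul_complex_Ioi (by rw [re_I_mul_sub_one]; linarith) 0).congr_fun
    (fun _ ht => (cexp_I_mul_mul_exp_neg_abs_of_pos z ht).symm) measurableSet_Ioi

theorem integrable_cexp_I_mul_mul_exp_neg_abs {z : ℂ} (h₁ : -1 < z.im) (h₂ : z.im < 1) :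
    Integrable (fun t : ℝ => cexp (I * z * t) * Real.exp (-|t|)) := by
  rw [← integrableOn_univ, ← Iic_union_Ioi (a := (0 : ℝ)), integrableOn_union]
  exact ⟨integrableOn_Iic_cexp_I_mul_mul_exp_neg_abs h₂,
    integrableOn_Ioi_cexp_I_mul_mul_exp_neg_abs h₁⟩

theorem integral_cexp_I_mul_mul_exp_neg_abs {z : ℂ} (h₁ : -1 < z.im) (h₂ : z.im < 1) :
    ∫ t : ℝ, cexp (I * z * t) * Real.exp (-|t|) = 2 / (1 + z ^ 2) := by
  have hp : 0 < (I * z + 1).re := by rw [re_I_mul_add_one]; linarith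
  have hm : (I * z - 1).re < 0 := by rw [re_I_mul_sub_one]; linarith
  rw [← intervalIntegral.integral_Iic_add_Ioi (integrableOn_Iic_cexp_I_mul_mul_exp_neg_abs h₂)
      (integrableOn_Ioi_cexp_I_mul_mul_exp_neg_abs h₁),
    setIntegral_congr_fun measurableSet_Iic fun _ => cexp_I_mul_mul_exp_neg_abs_of_nonpos z,
    setIntegral_congr_fun measurableSet_Ioi fun _ => cexp_I_mul_mul_exp_neg_abs_of_pos z,
    integral_exp_mul_complex_Iic hp, integral_exp_mul_complex_Ioi hm, one_add_sq_eq]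
  simp only [ofReal_zero, mul_zero, Complex.exp_zero]
  field_simp [ne_zero_of_re_ne_zero hp.ne', ne_zero_of_re_ne_zero hm.ne]
  ring

lemma cexp_I_mul_mul_sinh (z : ℂ) (t : ℝ) :
    cexp (I * z * t) * Real.sinh t = (cexp ((I * z + 1) * t) - cexp ((I * z - 1) * t)) / 2 := by
  rw [ofReal_sinh, Complex.sinh, mul_div_assoc', mul_sub, ← exp_add, ← exp_add]
  ring_nf

theorem integrableOn_Ioi_cexp_I_mul_mul_sinh {z : ℂ} (h : 1 < z.im) :
    IntegrableOn (fun t : ℝ => cexp (I * z * t) * Real.sinh t) (Ioi 0) := by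
  simp_rw [cexp_I_mul_mul_sinh]
  exact ((integrableOn_exp_mul_complex_Ioi (by rw [re_I_mul_add_one]; linarith) 0).sub
    (integrableOn_exp_mul_complex_Ioi (by rw [re_I_mul_sub_one]; linarith) 0)).div_const 2

theorem integral_Ioi_cexp_I_mul_mul_sinh {z : ℂ} (h : 1 < z.im) :
    ∫ t : ℝ in Ioi 0, cexp (I * z * t) * Real.sinh t = -(1 / (1 + z ^ 2)) := by
  have hp : (I * z + 1).re < 0 := by rw [re_I_mul_add_one]; linarith
  have hm : (I * z - 1).re < 0 := by rw [re_I_mul_sub_one]; linarith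
  simp_rw [cexp_I_mul_mul_sinh]
  rw [integral_div, integral_sub (integrableOn_exp_mul_complex_Ioi hp 0)
      (integrableOn_exp_mul_complex_Ioi hm 0),
    integral_exp_mul_complex_Ioi hp, integral_exp_mul_complex_Ioi hm, one_add_sq_eq]
  simp only [ofReal_zero, mul_zero, Complex.exp_zero]
  field_simp [ne_zero_of_re_ne_zero hp.ne, ne_zero_of_re_ne_zero hm.ne]
  ring

theorem isPosDefOnC_one_div_one_add_sq_strip :
    IsPosDefOnC (fun z => 1 / (1 + z ^ 2)) (HStrip (-1) 1) := by
  refine isPosDefOnC_of_eq_integral (μ := volume) (w := fun t => Real.exp (-|t|) / 2)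
    (ae_of_all _ fun t => by positivity) (fun z hz => ?_) (fun z hz => ?_)
  · obtain ⟨h₁, h₂⟩ := mem_HStrip_neg_one_one.mp hz
    simp_rw [ofReal_div, ← mul_div_assoc]
    exact (integrable_cexp_I_mul_mul_exp_neg_abs h₁ h₂).div_const _
  · obtain ⟨h₁, h₂⟩ := mem_HStrip_neg_one_one.mp hz
    simp_rw [ofReal_div, ← mul_div_assoc]
    rw [integral_div, integral_cexp_I_mul_mul_exp_neg_abs h₁ h₂]
    push_cast
    ring

theorem isPosDefOnC_neg_one_div_one_add_sq_upper :
    IsPosDefOnC (fun z => -(1 / (1 + z ^ 2))) (HStrip 1 ⊤) :=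
  isPosDefOnC_of_eq_integral (μ := volume.restrict (Ioi 0)) (w := Real.sinh)
    (ae_restrict_of_forall_mem measurableSet_Ioi fun _ ht => Real.sinh_nonneg_iff.mpr ht.le)
    (fun _ hz => integrableOn_Ioi_cexp_I_mul_mul_sinh (mem_HStrip_one_top.mp hz))
    (fun _ hz => (integral_Ioi_cexp_I_mul_mul_sinh (mem_HStrip_one_top.mp hz)).symm)

/-- `f(z) = 1/(1+z²)` is the Fourier–Laplace transform of `½ e^{-|t|} dt` on the strip
`S_{-1,1}`, positive definite there, and negative definite on the complementary half-planes. -/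
theorem stmt12 :
    (∀ z ∈ HStrip (-1) 1,
      1 / (1 + z ^ 2) =
        (1 / 2 : ℂ) * ∫ t : ℝ, Complex.exp (I * z * t) * (Real.exp (-|t|) : ℂ)) ∧
    IsPosDefOnC (fun z => 1 / (1 + z ^ 2)) (HStrip (-1) 1) ∧
    IsPosDefOnC (fun z => -(1 / (1 + z ^ 2))) (HStrip 1 ⊤) ∧
    IsPosDefOnC (fun z => -(1 / (1 + z ^ 2))) (HStrip ⊥ (-1)) := by
  refine ⟨fun z hz => ?_, isPosDefOnC_one_div_one_add_sq_strip,
    isPosDefOnC_neg_one_div_one_add_sq_upper, ?_⟩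
  · obtain ⟨h₁, h₂⟩ := mem_HStrip_neg_one_one.mp hz
    rw [integral_cexp_I_mul_mul_exp_neg_abs h₁ h₂]
    ring
  · simpa only [HStrip_neg, EReal.neg_top, neg_sq] using
      isPosDefOnC_neg_one_div_one_add_sq_upper.comp_neg
end
end

section
/- The function f(z) = 1/cosh(πz/2) satisfies, for every z in the horizontal strip S_{−1,1}, the integral representation 1/cosh(πz/2) = (1/π) ∫ℝ e^{−izt}/cosh t dt; moreover, for every integer n, f is positive definite on the horizontal strip S_{4n−1, 4n+1} and negative definite on the horizontal strip S_{4n+1, 4n+3}. -/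
/-!
Substituting `x = σ(2t)`, with `σ` the logistic sigmoid, turns `∫ e^{-izt} / cosh t dt` into the
Beta integral `B(u, 1 - u)` with `u = (1 - iz)/2`, which equals `Γ(u) Γ(1 - u) = π / sin(πu) =
π / cosh(πz/2)`. So on `S_{-1,1}` the function `1 / cosh(πz/2)` is the Fourier–Laplace transform
of the positive measure `dt / (π cosh t)`, and its quadratic forms are
`∫ |∑ ξ_k e^{-i z_k t}|² ≥ 0`.
Translating the points `z_k` by `-m i` moves the strip `S_{2m-1,2m+1}` onto `S_{-1,1}`, and
`cosh(π(z - 2mi)/2) = (-1)^m cosh(πz/2)`.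
-/

open Complex MeasureTheory Filter Set Topology
open scoped Real BigOperators ComplexOrder

noncomputable section

open ComplexConjugate

lemma ofReal_exp_cpow (x : ℝ) (w : ℂ) : ((Real.exp x : ℝ) : ℂ) ^ w = cexp (x * w) := by
  rw [cpow_def_of_ne_zero (ofReal_ne_zero.2 (Real.exp_pos x).ne'), ← ofReal_log (Real.exp_pos x).le,
    Real.log_exp]

lemma sigmoid_two_mul (t : ℝ) :
    Real.sigmoid (2 * t) = Real.exp (t - Real.log (2 * Real.cosh t)) := by
  rw [Real.exp_sub, Real.exp_log (by positivity), Real.sigmoid_def, Real.cosh_eq,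
    show -(2 * t) = -t - t by ring, Real.exp_sub]
  field_simp

lemma one_sub_sigmoid_two_mul (t : ℝ) :
    1 - Real.sigmoid (2 * t) = Real.exp (-t - Real.log (2 * Real.cosh t)) := by
  rw [← Real.sigmoid_neg, ← mul_neg, sigmoid_two_mul, Real.cosh_neg]

lemma hasDerivAt_sigmoid_two_mul (t : ℝ) :
    HasDerivAt (fun t => Real.sigmoid (2 * t))
      (2 * Real.exp (-2 * Real.log (2 * Real.cosh t))) t := by
  refine ((Real.hasDerivAt_sigmoid (2 * t)).comp t ((hasDerivAt_id t).const_mul 2)).congr_deriv ?_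
  rw [mul_one, one_sub_sigmoid_two_mul, sigmoid_two_mul, ← Real.exp_add]
  ring_nf

lemma abs_deriv_smul_betaIntegrand_sigmoid_two_mul (z : ℂ) (t : ℝ) :
    |2 * Real.exp (-2 * Real.log (2 * Real.cosh t))| •
      (((Real.sigmoid (2 * t) : ℝ) : ℂ) ^ ((1 - I * z) / 2 - 1) *
        (1 - ((Real.sigmoid (2 * t) : ℝ) : ℂ)) ^ ((1 + I * z) / 2 - 1)) =
      cexp (-I * z * t) / (Real.cosh t : ℂ) := by
  set L := Real.log (2 * Real.cosh t)
  have hL : cexp L = 2 * Real.cosh t := by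
    rw [← ofReal_exp, Real.exp_log (by positivity)]
    push_cast
    ring
  have hsub : (1 : ℂ) - (Real.sigmoid (2 * t) : ℝ) = ((1 - Real.sigmoid (2 * t) : ℝ) : ℂ) := by
    push_cast
    ring
  rw [abs_of_pos (by positivity), hsub, one_sub_sigmoid_two_mul, sigmoid_two_mul, ofReal_exp_cpow,
    ofReal_exp_cpow, real_smul, ← exp_add]
  calc ((2 * Real.exp (-2 * L) : ℝ) : ℂ) * cexp (↑(t - L) * ((1 - I * z) / 2 - 1) +
        ↑(-t - L) * ((1 + I * z) / 2 - 1))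
      = 2 * cexp (-I * z * t - L) := by
        push_cast
        rw [mul_assoc, ← exp_add]
        ring_nf
    _ = cexp (-I * z * t) / Real.cosh t := by
        rw [exp_sub, hL]
        field_simp

lemma image_sigmoid_two_mul : (fun t : ℝ => Real.sigmoid (2 * t)) '' univ = Ioo 0 1 := by
  rw [image_univ, ← Real.range_sigmoid]
  exact (mul_left_surjective₀ two_ne_zero).range_comp Real.sigmoid

lemma injOn_sigmoid_two_mul : InjOn (fun t : ℝ => Real.sigmoid (2 * t)) univ :=
  fun _ _ _ _ h => by simpa using h

lemma integral_cexp_neg_mul_div_cosh_eq_betaIntegral (z : ℂ) :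
    ∫ t : ℝ, cexp (-I * z * t) / (Real.cosh t : ℂ) =
      betaIntegral ((1 - I * z) / 2) ((1 + I * z) / 2) := by
  rw [betaIntegral, intervalIntegral.integral_of_le zero_le_one, integral_Ioc_eq_integral_Ioo,
    ← image_sigmoid_two_mul, integral_image_eq_integral_abs_deriv_smul MeasurableSet.univ
      (fun t _ => (hasDerivAt_sigmoid_two_mul t).hasDerivWithinAt) injOn_sigmoid_two_mul,
    setIntegral_univ]
  simp_rw [abs_deriv_smul_betaIntegrand_sigmoid_two_mul]

lemma re_one_sub_I_mul_div_two_pos {z : ℂ} (hz : |z.im| < 1) : 0 < ((1 - I * z) / 2).re := by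
  simp only [div_ofNat_re, sub_re, one_re, mul_re, I_re, I_im, zero_mul, one_mul, zero_sub]
  linarith [neg_abs_le z.im]

lemma re_one_add_I_mul_div_two_pos {z : ℂ} (hz : |z.im| < 1) : 0 < ((1 + I * z) / 2).re := by
  simp only [div_ofNat_re, add_re, one_re, mul_re, I_re, I_im, zero_mul, one_mul, zero_sub]
  linarith [le_abs_self z.im]

lemma integrable_cexp_neg_mul_div_cosh {z : ℂ} (hz : |z.im| < 1) :
    Integrable (fun t : ℝ => cexp (-I * z * t) / (Real.cosh t : ℂ)) := by
  have hβ := (betaIntegral_convergent (u := (1 - I * z) / 2) (v := (1 + I * z) / 2)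
    (re_one_sub_I_mul_div_two_pos hz) (re_one_add_I_mul_div_two_pos hz)).1.mono_set
    Ioo_subset_Ioc_self
  rw [← image_sigmoid_two_mul, integrableOn_image_iff_integrableOn_abs_deriv_smul
      MeasurableSet.univ (fun t _ => (hasDerivAt_sigmoid_two_mul t).hasDerivWithinAt)
      injOn_sigmoid_two_mul, integrableOn_univ] at hβ
  simpa only [abs_deriv_smul_betaIntegrand_sigmoid_two_mul] using hβ

theorem integral_cexp_neg_mul_div_cosh {z : ℂ} (hz : |z.im| < 1) :
    ∫ t : ℝ, cexp (-I * z * t) / (Real.cosh t : ℂ) = π / cosh (π * z / 2) := by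
  have hΓ := Gamma_mul_Gamma_eq_betaIntegral (s := (1 - I * z) / 2) (t := (1 + I * z) / 2)
    (re_one_sub_I_mul_div_two_pos hz) (re_one_add_I_mul_div_two_pos hz)
  rw [show (1 - I * z) / 2 + (1 + I * z) / 2 = 1 by ring, Gamma_one, one_mul] at hΓ
  have hsin : sin (π * ((1 - I * z) / 2)) = cosh (π * z / 2) := by
    rw [show (π : ℂ) * ((1 - I * z) / 2) = π / 2 - π * z / 2 * I by ring, sin_pi_div_two_sub,
      cos_mul_I]
  rw [integral_cexp_neg_mul_div_cosh_eq_betaIntegral, ← hΓ,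
    show (1 + I * z) / 2 = 1 - (1 - I * z) / 2 by ring, Gamma_mul_Gamma_one_sub, hsin]

lemma IsPosDefOnC.congr {f g : ℂ → ℂ} {S : Set ℂ} (hf : IsPosDefOnC f S) (hfg : EqOn f g S) :
    IsPosDefOnC g S := by
  intro n z hz ξ
  simpa only [hfg (hz _ _)] using hf n z hz ξ

lemma IsPosDefOnC.comp_sub_mul_I {f : ℂ → ℂ} {S : Set ℂ} (hf : IsPosDefOnC f S) (c : ℝ) :
    IsPosDefOnC (fun z => f (z - c * I)) ((· - c * I) ⁻¹' S) := by
  intro n z hz ξ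
  have hshift : ∀ k l, z k - conj (z l) - c * I =
      (z k - (c / 2 : ℝ) * I) - conj (z l - (c / 2 : ℝ) * I) := by
    intro k l
    simp only [map_sub, map_mul, conj_ofReal, conj_I]
    push_cast
    ring
  have hz' : ∀ k l, (z k - (c / 2 : ℝ) * I) - conj (z l - (c / 2 : ℝ) * I) ∈ S :=
    fun k l => hshift k l ▸ hz k l
  simpa only [hshift] using hf n _ hz' ξ

lemma cexp_neg_I_mul_sub_conj_mul (z w : ℂ) (t : ℝ) :
    cexp (-I * (z - conj w) * t) = cexp (-I * z * t) * conj (cexp (-I * w * t)) := by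
  rw [← exp_conj, ← exp_add]
  simp only [map_mul, map_neg, conj_I, conj_ofReal]
  ring_nf

theorem isPosDefOnC_integral_cexp (μ : Measure ℝ) {S : Set ℂ}
    (hint : ∀ z ∈ S, Integrable (fun t : ℝ => cexp (-I * z * t)) μ) :
    IsPosDefOnC (fun z => ∫ t, cexp (-I * z * t) ∂μ) S := by
  intro n z hz ξ
  have hint' : ∀ k l, Integrable
      (fun t : ℝ => cexp (-I * (z k - conj (z l)) * t) * ξ k * conj (ξ l)) μ :=
    fun k l => ((hint _ (hz k l)).mul_const _).mul_const _
  calc (0 : ℂ) ≤ ((∫ t, normSq (∑ k, ξ k * cexp (-I * z k * t)) ∂μ : ℝ) : ℂ) :=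
        zero_le_real.2 (integral_nonneg fun t => normSq_nonneg _)
    _ = ∫ t, ∑ k, ∑ l, cexp (-I * (z k - conj (z l)) * t) * ξ k * conj (ξ l) ∂μ := by
        rw [← integral_complex_ofReal]
        congr with t
        simp_rw [cexp_neg_I_mul_sub_conj_mul, ← mul_conj, map_sum, Finset.sum_mul, Finset.mul_sum,
          map_mul]
        exact Finset.sum_congr rfl fun k _ => Finset.sum_congr rfl fun l _ => by ring
    _ = ∑ k, ∑ l, (∫ t, cexp (-I * (z k - conj (z l)) * t) ∂μ) * ξ k * conj (ξ l) := by
        rw [integral_finsetSum _ fun k _ => integrable_finsetSum _ fun l _ => hint' k l]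
        refine Finset.sum_congr rfl fun k _ => ?_
        rw [integral_finsetSum _ fun l _ => hint' k l]
        simp_rw [integral_mul_const]

lemma one_div_cosh_pi_mul_div_two_eq_integral {z : ℂ} (hz : |z.im| < 1) :
    1 / cosh (π * z / 2) = 1 / π * ∫ t : ℝ, cexp (-I * z * t) / (Real.cosh t : ℂ) := by
  rw [integral_cexp_neg_mul_div_cosh hz]
  field_simp [ofReal_ne_zero.2 Real.pi_ne_zero]

def sechMeasure : Measure ℝ :=
  volume.withDensity fun t => ((π * Real.cosh t)⁻¹).toNNReal

lemma toNNReal_inv_pi_mul_cosh_smul (t : ℝ) (w : ℂ) :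
    ((π * Real.cosh t)⁻¹).toNNReal • w = 1 / π * (w / Real.cosh t) := by
  rw [NNReal.smul_def, Real.coe_toNNReal _ (by positivity), real_smul]
  push_cast
  ring

lemma integrable_cexp_neg_mul_sechMeasure {z : ℂ} (hz : |z.im| < 1) :
    Integrable (fun t : ℝ => cexp (-I * z * t)) sechMeasure := by
  rw [sechMeasure, integrable_withDensity_iff_integrable_smul (by fun_prop)]
  simpa only [toNNReal_inv_pi_mul_cosh_smul] using (integrable_cexp_neg_mul_div_cosh hz).const_mul _

lemma one_div_cosh_pi_mul_div_two_eq_integral_sechMeasure {z : ℂ} (hz : |z.im| < 1) :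
    1 / cosh (π * z / 2) = ∫ t : ℝ, cexp (-I * z * t) ∂sechMeasure := by
  rw [sechMeasure, integral_withDensity_eq_integral_smul (by fun_prop)]
  simp only [toNNReal_inv_pi_mul_cosh_smul]
  rw [integral_const_mul, one_div_cosh_pi_mul_div_two_eq_integral hz]

lemma mem_hStrip_coe_iff {a b : ℝ} {z : ℂ} : z ∈ HStrip a b ↔ a < z.im ∧ z.im < b := by
  simp only [HStrip, mem_ofPred_eq, EReal.coe_lt_coe_iff]

lemma preimage_sub_mul_I_hStrip (a b c : ℝ) :
    (· - c * I) ⁻¹' HStrip a b = HStrip ↑(a + c) ↑(b + c) := by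
  ext z
  simp only [mem_preimage, mem_hStrip_coe_iff, sub_im, mul_im, ofReal_re, I_im, ofReal_im, I_re]
  constructor <;> rintro ⟨h₁, h₂⟩ <;> constructor <;> linarith

lemma cosh_pi_mul_sub_two_int_mul_I_div_two (z : ℂ) (m : ℤ) :
    cosh (π * (z - 2 * m * I) / 2) = m.negOnePow * cosh (π * z / 2) := by
  rw [show (π : ℂ) * (z - 2 * m * I) / 2 = π * z / 2 - m * (π * I) by ring]
  exact cosh_antiperiodic.sub_int_mul_eq m

theorem isPosDefOnC_one_div_cosh :
    IsPosDefOnC (fun z => 1 / cosh (π * z / 2)) (HStrip ↑(-1 : ℝ) ↑(1 : ℝ)) := by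
  have habs : ∀ z ∈ HStrip ↑(-1 : ℝ) ↑(1 : ℝ), |z.im| < 1 :=
    fun z hz => abs_lt.2 (mem_hStrip_coe_iff.1 hz)
  exact (isPosDefOnC_integral_cexp sechMeasure fun z hz =>
    integrable_cexp_neg_mul_sechMeasure (habs z hz)).congr
      fun z hz => (one_div_cosh_pi_mul_div_two_eq_integral_sechMeasure (habs z hz)).symm

theorem isPosDefOnC_negOnePow_mul_one_div_cosh (m : ℤ) :
    IsPosDefOnC (fun z => m.negOnePow * (1 / cosh (π * z / 2)))
      (HStrip ↑(2 * m - 1 : ℝ) ↑(2 * m + 1 : ℝ)) := by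
  have hshift := isPosDefOnC_one_div_cosh.comp_sub_mul_I (2 * m)
  rw [preimage_sub_mul_I_hStrip] at hshift
  convert hshift using 2
  · push_cast
    rw [cosh_pi_mul_sub_two_int_mul_I_div_two]
    rcases Int.units_eq_one_or m.negOnePow with h | h <;> simp [h]
  all_goals congr 1; ring

/-- `f(z) = 1/cosh(πz/2)` has the stated Fourier integral representation on `S_{-1,1}`, is
positive definite on every strip `S_{4n-1,4n+1}` and negative definite on every strip
`S_{4n+1,4n+3}`, `n ∈ ℤ`. -/
theorem stmt13 :
    (∀ z ∈ HStrip (-1) 1,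
      1 / Complex.cosh ((π : ℂ) * z / 2) =
        (1 / (π : ℂ)) * ∫ t : ℝ, Complex.exp (-I * z * t) / (Real.cosh t : ℂ)) ∧
    (∀ n : ℤ,
      IsPosDefOnC (fun z => 1 / Complex.cosh ((π : ℂ) * z / 2))
        (HStrip (((4 * n - 1 : ℤ) : ℝ) : EReal) (((4 * n + 1 : ℤ) : ℝ) : EReal)) ∧
      IsPosDefOnC (fun z => -(1 / Complex.cosh ((π : ℂ) * z / 2)))
        (HStrip (((4 * n + 1 : ℤ) : ℝ) : EReal) (((4 * n + 3 : ℤ) : ℝ) : EReal))) := by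
  refine ⟨fun z hz => one_div_cosh_pi_mul_div_two_eq_integral ?_, fun n => ⟨?_, ?_⟩⟩
  · rw [← EReal.coe_one, ← EReal.coe_neg, mem_hStrip_coe_iff] at hz
    exact abs_lt.2 hz
  · convert isPosDefOnC_negOnePow_mul_one_div_cosh (2 * n) using 2
    · simp [Int.negOnePow_two_mul]
    all_goals congr 1; push_cast; ring
  · convert isPosDefOnC_negOnePow_mul_one_div_cosh (2 * n + 1) using 2
    · simp [Int.negOnePow_two_mul_add_one]
    all_goals congr 1; push_cast; ring
end
end

section
/- For every z ∈ ℂ with Re z > 0, the Gamma function satisfies Γ(z) = ∫_{−∞}^{+∞} e^{−zt} e^{−e^{−t}} dt; consequently Γ is co-positive definite on the right half-plane T_{0,+∞} = {z ∈ ℂ : Re z > 0}. -/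
open Complex MeasureTheory Filter Set Topology
open scoped Real BigOperators ComplexOrder

noncomputable section

lemma rexp_neg_deriv_aux : ∀ x ∈ (univ : Set ℝ),
    HasDerivWithinAt (Real.exp ∘ Neg.neg) (-Real.exp (-x)) univ x :=
  fun x _ ↦ mul_neg_one (Real.exp (-x)) ▸
    ((Real.hasDerivAt_exp (-x)).comp x (hasDerivAt_neg x)).hasDerivWithinAt

lemma rexp_neg_image_aux : Real.exp ∘ Neg.neg '' univ = Ioi 0 := by
  rw [Set.image_comp, Set.image_univ_of_surjective neg_surjective, Set.image_univ, Real.range_exp]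

lemma rexp_neg_injOn_aux : univ.InjOn (Real.exp ∘ Neg.neg) :=
  Real.exp_injective.injOn.comp neg_injective.injOn (univ.mapsTo_univ _)

lemma pow_aux (x : ℝ) (s : ℂ) :
    ((Real.exp (-x) : ℝ) : ℂ) ^ (s - 1) * ((Real.exp (-x) : ℝ) : ℂ) = Complex.exp (-s * x) := by
  have h1 : ((Real.exp (-x) : ℝ) : ℂ) = Complex.exp (-(x : ℂ)) := by
    rw [Complex.ofReal_exp]; norm_num
  rw [h1, Complex.cpow_def_of_ne_zero (Complex.exp_ne_zero _),
    Complex.log_exp (by simpa using Real.pi_pos) (by simpa using Real.pi_nonneg),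
    ← Complex.exp_add]
  ring_nf

lemma integrand_eq (z : ℂ) (x : ℝ) :
    |(-Real.exp (-x))| • ((((Real.exp ∘ Neg.neg) x : ℝ) : ℂ) ^ (z - 1) •
        ((Real.exp (-(Real.exp ∘ Neg.neg) x) : ℝ) : ℂ))
      = Complex.exp (-z * x) * (Real.exp (-Real.exp (-x)) : ℂ) := by
  simp only [Function.comp_apply, abs_neg, abs_of_pos (Real.exp_pos _), smul_eq_mul,
    Complex.real_smul, Complex.ofReal_exp]
  push_cast
  rw [Complex.cpow_def_of_ne_zero (Complex.exp_ne_zero _),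
    Complex.log_exp (by simpa using Real.pi_pos) (by simpa using Real.pi_nonneg)]
  simp only [← Complex.exp_add]
  congr 1
  ring

lemma mellin_integrand_integrable {z : ℂ} (hz : 0 < z.re) :
    IntegrableOn (fun x : ℝ => (x : ℂ) ^ (z - 1) • ((Real.exp (-x) : ℝ) : ℂ)) (Ioi 0) := by
  have := Complex.GammaIntegral_convergent hz
  refine this.congr_fun (fun x hx => ?_) measurableSet_Ioi
  simp [smul_eq_mul, mul_comm]

lemma gamma_integrable {z : ℂ} (hz : 0 < z.re) :
    Integrable (fun t : ℝ => Complex.exp (-z * t) * (Real.exp (-Real.exp (-t)) : ℂ)) := by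
  have h := (integrableOn_image_iff_integrableOn_abs_deriv_smul MeasurableSet.univ
    rexp_neg_deriv_aux rexp_neg_injOn_aux
    (fun x : ℝ => (x : ℂ) ^ (z - 1) • ((Real.exp (-x) : ℝ) : ℂ))).mp
    (by rw [rexp_neg_image_aux]; exact mellin_integrand_integrable hz)
  rw [integrableOn_univ] at h
  exact h.congr (Filter.Eventually.of_forall fun x => integrand_eq z x)

lemma gamma_eq {z : ℂ} (hz : 0 < z.re) :
    Complex.Gamma z = ∫ t : ℝ, Complex.exp (-z * t) * (Real.exp (-Real.exp (-t)) : ℂ) := by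
  rw [Complex.Gamma_eq_integral hz, Complex.GammaIntegral_eq_mellin, mellin,
    ← rexp_neg_image_aux, integral_image_eq_integral_abs_deriv_smul MeasurableSet.univ
      rexp_neg_deriv_aux rexp_neg_injOn_aux, setIntegral_univ]
  exact integral_congr_ae (Filter.Eventually.of_forall fun x => integrand_eq z x)

lemma copos : IsCoPosDefOnC Complex.Gamma (VStrip 0 ⊤) := by
  intro n z hz ξ
  have hre : ∀ k l, 0 < (z k + (starRingEnd ℂ) (z l)).re := by
    intro k l
    have h := (hz k l).1
    exact_mod_cast h
  set F : Fin n → Fin n → ℝ → ℂ := fun k l t =>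
    (ξ k * Complex.exp (-(z k) * t)) * (starRingEnd ℂ) (ξ l * Complex.exp (-(z l) * t)) *
      (Real.exp (-Real.exp (-t)) : ℂ) with hF
  have pointwise : ∀ k l (t : ℝ),
      Complex.exp (-(z k + (starRingEnd ℂ) (z l)) * t) * (Real.exp (-Real.exp (-t)) : ℂ) *
        (ξ k * (starRingEnd ℂ) (ξ l)) = F k l t := by
    intro k l t
    rw [hF]
    simp only []
    rw [map_mul, ← Complex.exp_conj, map_mul, map_neg, Complex.conj_ofReal,
      neg_add, add_mul, Complex.exp_add]
    ring
  have hint : ∀ k l, Integrable (F k l) := by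
    intro k l
    have h := (gamma_integrable (hre k l)).mul_const (ξ k * (starRingEnd ℂ) (ξ l))
    exact h.congr (Filter.Eventually.of_forall fun t => pointwise k l t)
  have key : ∀ k l, Complex.Gamma (z k + (starRingEnd ℂ) (z l)) * ξ k * (starRingEnd ℂ) (ξ l)
      = ∫ t : ℝ, F k l t := by
    intro k l
    rw [gamma_eq (hre k l), mul_assoc, ← integral_mul_const]
    exact integral_congr_ae (Filter.Eventually.of_forall fun t => pointwise k l t)
  calc ∑ k, ∑ l, Complex.Gamma (z k + (starRingEnd ℂ) (z l)) * ξ k * (starRingEnd ℂ) (ξ l)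
      = ∑ k, ∑ l, ∫ t : ℝ, F k l t := by
        refine Finset.sum_congr rfl fun k _ => Finset.sum_congr rfl fun l _ => key k l
    _ = ∑ k, ∫ t : ℝ, ∑ l, F k l t :=
        Finset.sum_congr rfl fun k _ => (integral_finset_sum _ (fun l _ => hint k l)).symm
    _ = ∫ t : ℝ, ∑ k, ∑ l, F k l t :=
        (integral_finset_sum _ (fun k _ => integrable_finset_sum _ (fun l _ => hint k l))).symm
    _ = ∫ t : ℝ, ((Complex.normSq (∑ k, ξ k * Complex.exp (-(z k) * t)) *
          Real.exp (-Real.exp (-t)) : ℝ) : ℂ) := by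
        refine integral_congr_ae (Filter.Eventually.of_forall fun t => ?_)
        simp only []
        rw [Complex.ofReal_mul, ← Complex.mul_conj, map_sum]
        simp only [hF, Finset.sum_mul, Finset.mul_sum]
        exact Finset.sum_comm
    _ = ((∫ t : ℝ, Complex.normSq (∑ k, ξ k * Complex.exp (-(z k) * t)) *
          Real.exp (-Real.exp (-t)) : ℝ) : ℂ) := integral_ofReal
    _ ≥ 0 := by
        rw [ge_iff_le, Complex.zero_le_real]
        exact integral_nonneg fun t => mul_nonneg (Complex.normSq_nonneg _) (Real.exp_pos _).le


/-- `Γ(z) = ∫ℝ e^{-zt} e^{-e^{-t}} dt` for `Re z > 0`, and consequently `Γ` is co-positive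
definite on the right half-plane. -/
theorem stmt14 :
    (∀ z : ℂ, 0 < z.re →
      Complex.Gamma z =
        ∫ t : ℝ, Complex.exp (-z * t) * (Real.exp (-Real.exp (-t)) : ℂ)) ∧
    IsCoPosDefOnC Complex.Gamma (VStrip 0 ⊤) := by
  exact ⟨fun z hz => gamma_eq hz, copos⟩
end
end

section
/- For every integer n ≥ 0 and every z in the vertical strip T_{−n−1,−n} = {z ∈ ℂ : −n−1 < Re z < −n}, the Gamma function satisfies Γ(z) = ∫_{−∞}^{+∞} e^{−zt} (∑_{m=n+1}^{∞} ((−1)^m / m!) e^{−mt}) dt; consequently (−1)^{n+1} Γ is co-positive definite on T_{−n−1,−n}, i.e. Γ is co-negative definite on T_{−n−1,−n} when n is even and co-positive definite there when n is odd. -/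
open Complex MeasureTheory Filter Set Topology
open scoped Real BigOperators ComplexOrder

noncomputable section

/-!
Write `E_k(x) = exp x - ∑_{m<k} x^m/m!` and `K_k(t) = E_k(-e^{-t})`, the tail
`∑_{m≥k} (-1)^m e^{-mt}/m!`. The substitution `x = e^{-t}` in Euler's integral gives
`Γ(z) = ∫ e^{-zt} K_0(t) dt` for `0 < Re z`. Since `K_{k+1}' = e^{-t} K_k`, an integration by
parts turns `Γ(z + 1) = z Γ(z)` into `Γ(z) = ∫ e^{-zt} K_{k+1}(t) dt`, one strip further left;
the integrals converge on `-k < Re z < 1 - k` because `K_k = O(e^{-kt})` at `+∞` and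
`K_k = O(e^{(1-k)t})` at `-∞`.

Moreover `(-1)^k E_k ≥ 0` on `x ≤ 0`: it vanishes at `0` for `k ≥ 1` and its derivative is
`-(-1)^{k-1} E_{k-1} ≤ 0`. So on the strip `(-1)^{n+1} Γ` is the two-sided Laplace transform of
the nonnegative function `c = (-1)^{n+1} K_{n+1}`, and
`∑ (-1)^{n+1} Γ(z_k + conj z_l) ξ_k conj ξ_l = ∫ |∑ ξ_k e^{-z_k t}|² c(t) dt ≥ 0`.
-/

open Finset

def expTail (k : ℕ) (x : ℝ) : ℝ :=
  Real.exp x - ∑ m ∈ range k, x ^ m / m.factorial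

theorem hasSum_expTail (k : ℕ) (x : ℝ) :
    HasSum (fun m : ℕ => if k ≤ m then x ^ m / m.factorial else 0) (expTail k x) := by
  have hexp : HasSum (fun m : ℕ => x ^ m / m.factorial) (Real.exp x) := by
    rw [Real.exp_eq_exp_ℝ]
    exact NormedSpace.expSeries_div_hasSum_exp x
  have hfin : HasSum (fun m : ℕ => if m < k then x ^ m / m.factorial else 0)
      (∑ m ∈ range k, if m < k then x ^ m / m.factorial else 0) :=
    hasSum_sum_of_ne_finset_zero (by simp +contextual)
  rw [sum_ite_of_true (fun m hm => mem_range.mp hm)] at hfin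
  refine (hexp.sub hfin).congr_fun fun m => ?_
  by_cases hm : k ≤ m <;> simp [hm, not_lt.mpr, lt_of_not_ge]

theorem continuous_expTail (k : ℕ) : Continuous (expTail k) := by
  unfold expTail
  fun_prop

theorem hasDerivAt_expTail_succ (k : ℕ) (x : ℝ) :
    HasDerivAt (expTail (k + 1)) (expTail k x) x := by
  have hterm (m : ℕ) : HasDerivAt (fun y : ℝ => y ^ (m + 1) / (m + 1).factorial)
      (x ^ m / m.factorial) x := by
    refine ((hasDerivAt_pow (m + 1) x).div_const _).congr_deriv ?_
    rw [Nat.factorial_succ]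
    push_cast
    field_simp
  have hsum : HasDerivAt (fun y : ℝ => ∑ m ∈ range (k + 1), y ^ m / m.factorial)
      (∑ m ∈ range k, x ^ m / m.factorial) x := by
    simp_rw [sum_range_succ']
    simpa using (HasDerivAt.fun_sum fun m _ => hterm m).add_const 1
  exact (Real.hasDerivAt_exp x).sub hsum

theorem neg_one_pow_mul_expTail_nonneg (k : ℕ) {x : ℝ} (hx : x ≤ 0) :
    0 ≤ (-1) ^ k * expTail k x := by
  induction k generalizing x with
  | zero => simpa [expTail] using (Real.exp_pos x).le
  | succ k ih =>
    have hanti : AntitoneOn (fun y => (-1) ^ (k + 1) * expTail (k + 1) y) (Set.Iic 0) := by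
      refine antitoneOn_of_hasDerivWithinAt_nonpos (convex_Iic 0)
        (continuous_const.mul (continuous_expTail _)).continuousOn
        (fun y _ => ((hasDerivAt_expTail_succ k y).const_mul _).hasDerivWithinAt) ?_
      intro y hy
      rw [interior_Iic] at hy
      have hprev := ih hy.le
      rw [pow_succ]
      linarith
    calc (0 : ℝ) = (-1) ^ (k + 1) * expTail (k + 1) 0 := by simp [expTail, sum_range_succ']
      _ ≤ _ := hanti hx Set.self_mem_Iic hx

theorem abs_expTail_le (k : ℕ) (x : ℝ) : |expTail k x| ≤ |x| ^ k * Real.exp |x| := by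
  have h := Complex.norm_exp_sub_sum_le_norm_mul_exp (x : ℂ) k
  rw [Complex.norm_real, Real.norm_eq_abs] at h
  have hcast : ((expTail k x : ℝ) : ℂ) = Complex.exp x - ∑ m ∈ range k, (x : ℂ) ^ m / m.factorial := by
    push_cast [expTail]; rfl
  rwa [← hcast, Complex.norm_real, Real.norm_eq_abs] at h

def saalschutzKernel (k : ℕ) (t : ℝ) : ℝ :=
  expTail k (-Real.exp (-t))

theorem tsum_ite_eq_saalschutzKernel (k : ℕ) (t : ℝ) :
    (∑' m : ℕ, if k ≤ m then ((-1) ^ m / (m.factorial : ℝ)) * Real.exp (-(m : ℝ) * t) else 0) =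
      saalschutzKernel k t := by
  refine ((hasSum_expTail k _).congr_fun fun m => ?_).tsum_eq
  rw [neg_pow (Real.exp _), ← Real.exp_nat_mul, mul_neg, ← neg_mul]
  split_ifs <;> ring

theorem continuous_saalschutzKernel (k : ℕ) : Continuous (saalschutzKernel k) :=
  (continuous_expTail k).comp (by fun_prop)

theorem hasDerivAt_saalschutzKernel_succ (k : ℕ) (t : ℝ) :
    HasDerivAt (saalschutzKernel (k + 1)) (Real.exp (-t) * saalschutzKernel k t) t := by
  have h := (hasDerivAt_expTail_succ k (-Real.exp (-t))).comp t (hasDerivAt_neg t).exp.neg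
  exact h.congr_deriv (by simp only [saalschutzKernel]; ring)

theorem saalschutzKernel_isBigO_atTop (k : ℕ) :
    saalschutzKernel k =O[atTop] fun t => Real.exp (-k * t) := by
  refine Asymptotics.IsBigO.of_bound (Real.exp 1) ?_
  filter_upwards [eventually_ge_atTop 0] with t ht
  have hx : Real.exp (-t) ≤ 1 := Real.exp_le_one_iff.mpr (by linarith)
  rw [Real.norm_eq_abs, Real.norm_eq_abs, abs_of_pos (Real.exp_pos _)]
  calc |saalschutzKernel k t| ≤ |-Real.exp (-t)| ^ k * Real.exp |-Real.exp (-t)| :=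
        abs_expTail_le k _
    _ = Real.exp (-k * t) * Real.exp (Real.exp (-t)) := by
        rw [abs_neg, abs_of_pos (Real.exp_pos _), ← Real.exp_nat_mul, mul_neg, ← neg_mul]
    _ ≤ Real.exp (-k * t) * Real.exp 1 := by gcongr
    _ = Real.exp 1 * Real.exp (-k * t) := mul_comm _ _

theorem saalschutzKernel_isBigO_atBot (k : ℕ) :
    saalschutzKernel k =O[atBot] fun t => Real.exp ((1 - k) * t) := by
  refine Asymptotics.IsBigO.of_bound (k + 1) ?_
  filter_upwards [eventually_le_atBot 0] with t ht
  have hkt : 0 ≤ (k : ℝ) * -t := mul_nonneg k.cast_nonneg (neg_nonneg.mpr ht)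
  have hlead : |Real.exp (-Real.exp (-t))| ≤ Real.exp ((1 - k) * t) := by
    rw [abs_of_pos (Real.exp_pos _)]
    exact Real.exp_le_exp.mpr (by nlinarith [Real.add_one_le_exp (-t)])
  have hterm (m : ℕ) (hm : m ∈ range k) :
      |(-Real.exp (-t)) ^ m / m.factorial| ≤ Real.exp ((1 - k) * t) := by
    have hmk : (m : ℝ) + 1 ≤ k := by exact_mod_cast mem_range.mp hm
    rw [abs_div, abs_pow, abs_neg, abs_of_pos (Real.exp_pos _), Nat.abs_cast, ← Real.exp_nat_mul]
    calc Real.exp (m * -t) / m.factorial ≤ Real.exp (m * -t) :=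
          div_le_self (Real.exp_pos _).le (by exact_mod_cast m.factorial_pos)
      _ ≤ Real.exp ((1 - k) * t) := Real.exp_le_exp.mpr (by nlinarith)
  rw [Real.norm_eq_abs, Real.norm_eq_abs, abs_of_pos (Real.exp_pos _)]
  calc |saalschutzKernel k t|
      ≤ |Real.exp (-Real.exp (-t))| + ∑ m ∈ range k, |(-Real.exp (-t)) ^ m / m.factorial| :=
        (abs_sub _ _).trans (add_le_add le_rfl (abs_sum_le_sum_abs _ _))
    _ ≤ Real.exp ((1 - k) * t) + k • Real.exp ((1 - k) * t) := by
        gcongr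
        simpa using sum_le_card_nsmul _ _ _ hterm
    _ = (k + 1) * Real.exp ((1 - k) * t) := by
        rw [nsmul_eq_mul]
        ring

theorem integrable_of_isBigO_exp {E : Type*} [NormedAddCommGroup E] {f : ℝ → E}
    (hf : Continuous f) {a b : ℝ} (ha : a < 0) (hb : 0 < b)
    (htop : f =O[atTop] fun t => Real.exp (a * t)) (hbot : f =O[atBot] fun t => Real.exp (b * t)) :
    Integrable f :=
  hf.locallyIntegrable.integrable_of_isBigO_atBot_atTop
    hbot ⟨Iic 0, Iic_mem_atBot 0, integrableOn_exp_mul_Iic hb 0⟩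
    htop ⟨Ioi 0, Ioi_mem_atTop 0, integrableOn_exp_mul_Ioi ha 0⟩

theorem isBigO_cexp_mul_ofReal {l : Filter ℝ} {g : ℝ → ℝ} {a : ℝ} (z : ℂ)
    (hg : g =O[l] fun t => Real.exp (a * t)) :
    (fun t : ℝ => Complex.exp (-z * t) * g t) =O[l] fun t => Real.exp ((a - z.re) * t) := by
  have hexp : (fun t : ℝ => Complex.exp (-z * t)) =O[l] fun t => Real.exp (-z.re * t) :=
    Asymptotics.isBigO_of_le _ fun t => by simp [Complex.norm_exp]
  have hg' : (fun t => (g t : ℂ)) =O[l] g := Asymptotics.isBigO_of_le _ fun t => by simp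
  refine (hexp.mul (hg'.trans hg)).congr_right fun t => ?_
  rw [← Real.exp_add]
  ring_nf

theorem integrable_cexp_mul_saalschutzKernel (k : ℕ) {z : ℂ} (h₁ : -(k : ℝ) < z.re)
    (h₂ : z.re < 1 - k) :
    Integrable fun t : ℝ => Complex.exp (-z * t) * saalschutzKernel k t :=
  integrable_of_isBigO_exp (by have := continuous_saalschutzKernel k; fun_prop)
    (a := -k - z.re) (b := 1 - k - z.re) (by linarith) (by linarith)
    (isBigO_cexp_mul_ofReal z (saalschutzKernel_isBigO_atTop k))
    (isBigO_cexp_mul_ofReal z (saalschutzKernel_isBigO_atBot k))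

theorem Gamma_eq_integral_cexp_mul_exp_neg_exp {z : ℂ} (hz : 0 < z.re) :
    Complex.Gamma z = ∫ t : ℝ, Complex.exp (-z * t) * Real.exp (-Real.exp (-t)) := by
  -- `mellin_eq_fourier` performs the substitution `x = e^{-t}`; undo the Fourier normalisation.
  rw [Complex.Gamma_eq_integral hz, Complex.GammaIntegral_eq_mellin, mellin_eq_fourier,
    Real.fourier_eq']
  congr 1
  ext t
  rw [Complex.real_smul, smul_eq_mul, ← mul_assoc, Complex.ofReal_exp, ← Complex.exp_add]
  congr 2
  conv_rhs => rw [← Complex.re_add_im z]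
  simp only [RCLike.inner_apply, conj_trivial]
  push_cast
  field_simp
  ring

theorem integral_cexp_mul_saalschutzKernel_succ (k : ℕ) {w : ℂ} (h₁ : -(k : ℝ) - 1 < w.re)
    (h₂ : w.re < -k) :
    ∫ t : ℝ, Complex.exp (-(w + 1) * t) * saalschutzKernel k t =
      w * ∫ t : ℝ, Complex.exp (-w * t) * saalschutzKernel (k + 1) t := by
  have hu (t : ℝ) :
      HasDerivAt (fun t : ℝ => Complex.exp (-w * t)) (-w * Complex.exp (-w * t)) t := by
    simpa [mul_comm] using ((hasDerivAt_id (t : ℂ)).const_mul (-w)).cexp.comp_ofReal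
  have hv (t : ℝ) : HasDerivAt (fun t => (saalschutzKernel (k + 1) t : ℂ))
      ((Real.exp (-t) * saalschutzKernel k t : ℝ) : ℂ) t :=
    (hasDerivAt_saalschutzKernel_succ k t).ofReal_comp
  have hshift (t : ℝ) : Complex.exp (-(w + 1) * t) * saalschutzKernel k t =
      Complex.exp (-w * t) * ((Real.exp (-t) * saalschutzKernel k t : ℝ) : ℂ) := by
    rw [neg_add, add_mul, Complex.exp_add, neg_one_mul]
    push_cast
    ring
  have hint : Integrable fun t : ℝ => Complex.exp (-w * t) * saalschutzKernel (k + 1) t :=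
    integrable_cexp_mul_saalschutzKernel (k + 1) (by push_cast; linarith) (by push_cast; linarith)
  have hint' : Integrable fun t : ℝ => Complex.exp (-(w + 1) * t) * saalschutzKernel k t :=
    integrable_cexp_mul_saalschutzKernel k (by simp; linarith) (by simp; linarith)
  simp_rw [hshift] at hint' ⊢
  rw [integral_mul_deriv_eq_deriv_mul_of_integrable (fun t _ => hu t) (fun t _ => hv t) hint'
    ((hint.const_mul (-w)).congr (ae_of_all _ fun t => (mul_assoc _ _ _).symm)) hint]
  simp_rw [mul_assoc, integral_const_mul]
  ring

theorem Gamma_eq_integral_cexp_mul_saalschutzKernel (k : ℕ) {z : ℂ} (h₁ : -(k : ℝ) < z.re)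
    (h₂ : z.re < 1 - k) :
    Complex.Gamma z = ∫ t : ℝ, Complex.exp (-z * t) * saalschutzKernel k t := by
  induction k generalizing z with
  | zero =>
    simpa [saalschutzKernel, expTail] using
      Gamma_eq_integral_cexp_mul_exp_neg_exp (by simpa using h₁)
  | succ k ih =>
    push_cast at h₁ h₂
    have hz : z ≠ 0 := by
      rintro rfl
      simp only [Complex.zero_re] at h₂
      linarith [k.cast_nonneg (α := ℝ)]
    have hrec := Complex.Gamma_add_one z hz
    rw [ih (by simp; linarith) (by simp; linarith),
      integral_cexp_mul_saalschutzKernel_succ k (by linarith) (by linarith)] at hrec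
    exact (mul_left_cancel₀ hz hrec).symm

theorem mem_vStrip_coe {a b : ℝ} {z : ℂ} : z ∈ VStrip a b ↔ a < z.re ∧ z.re < b := by
  simp [VStrip]

open ComplexConjugate in
theorem isCoPosDefOnC_of_eq_integral_cexp_mul {f : ℂ → ℂ} {T : Set ℂ} {c : ℝ → ℝ}
    (hc : ∀ t, 0 ≤ c t) (hint : ∀ z ∈ T, Integrable fun t : ℝ => Complex.exp (-z * t) * c t)
    (hf : ∀ z ∈ T, f z = ∫ t : ℝ, Complex.exp (-z * t) * c t) : IsCoPosDefOnC f T := by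
  intro N z hz ξ
  set g : Fin N → ℝ → ℂ := fun k t => ξ k * Complex.exp (-z k * t)
  have hterm (k l : Fin N) (t : ℝ) :
      Complex.exp (-(z k + conj (z l)) * t) * c t * ξ k * conj (ξ l) =
        g k t * conj (g l t) * c t := by
    simp only [g, map_mul, ← Complex.exp_conj, map_neg, Complex.conj_ofReal]
    rw [neg_add, add_mul, Complex.exp_add]
    ring
  have hint' (k l : Fin N) : Integrable fun t => g k t * conj (g l t) * c t := by
    simpa only [hterm] using ((hint _ (hz k l)).mul_const (ξ k)).mul_const (conj (ξ l))
  calc (0 : ℂ) ≤ ((∫ t, Complex.normSq (∑ k, g k t) * c t : ℝ) : ℂ) := by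
        exact_mod_cast integral_nonneg fun t => mul_nonneg (Complex.normSq_nonneg _) (hc t)
    _ = ∫ t, ∑ k, ∑ l, g k t * conj (g l t) * c t := by
        rw [← integral_complex_ofReal]
        congr 1
        ext t
        push_cast
        rw [← Complex.mul_conj, map_sum, sum_mul_sum, sum_mul]
        simp_rw [sum_mul]
    _ = ∑ k, ∑ l, ∫ t, g k t * conj (g l t) * c t := by
        rw [integral_finsetSum _ fun k _ => integrable_finsetSum _ fun l _ => hint' k l]
        exact sum_congr rfl fun k _ => integral_finsetSum _ fun l _ => hint' k l
    _ = ∑ k, ∑ l, f (z k + conj (z l)) * ξ k * conj (ξ l) := by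
        refine sum_congr rfl fun k _ => sum_congr rfl fun l _ => ?_
        simp_rw [← hterm, integral_mul_const, hf _ (hz k l)]

/-- Cauchy–Saalschütz representation: on the vertical strip `T_{-n-1,-n}` the Gamma function is
the Laplace transform of `t ↦ ∑_{m>n} ((-1)^m/m!) e^{-mt}`; consequently `(-1)^{n+1} Γ` is
co-positive definite on `T_{-n-1,-n}`. -/
theorem stmt15 (n : ℕ) :
    (∀ z ∈ VStrip ((-(n : ℝ) - 1 : ℝ) : EReal) ((-(n : ℝ) : ℝ) : EReal),
      Complex.Gamma z =
        ∫ t : ℝ, Complex.exp (-z * t) *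
          ((∑' m : ℕ, if n + 1 ≤ m then ((-1) ^ m / (m.factorial : ℝ)) * Real.exp (-(m : ℝ) * t)
            else 0 : ℝ) : ℂ)) ∧
    IsCoPosDefOnC (fun z => (-1) ^ (n + 1) * Complex.Gamma z)
      (VStrip ((-(n : ℝ) - 1 : ℝ) : EReal) ((-(n : ℝ) : ℝ) : EReal)) := by
  have hstrip : ∀ z ∈ VStrip ((-(n : ℝ) - 1 : ℝ) : EReal) ((-(n : ℝ) : ℝ) : EReal),
      -((n + 1 : ℕ) : ℝ) < z.re ∧ z.re < 1 - (n + 1 : ℕ) := fun z hz => by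
    rw [mem_vStrip_coe] at hz
    push_cast
    constructor <;> linarith [hz.1, hz.2]
  have hGamma z (hz : z ∈ VStrip ((-(n : ℝ) - 1 : ℝ) : EReal) ((-(n : ℝ) : ℝ) : EReal)) :
      Complex.Gamma z = ∫ t : ℝ, Complex.exp (-z * t) * saalschutzKernel (n + 1) t :=
    Gamma_eq_integral_cexp_mul_saalschutzKernel (n + 1) (hstrip z hz).1 (hstrip z hz).2
  refine ⟨fun z hz => by simpa only [tsum_ite_eq_saalschutzKernel] using hGamma z hz, ?_⟩
  refine isCoPosDefOnC_of_eq_integral_cexp_mul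
    (c := fun t => (-1) ^ (n + 1) * saalschutzKernel (n + 1) t)
    (fun t => neg_one_pow_mul_expTail_nonneg _ (neg_nonpos.mpr (Real.exp_pos _).le))
    (fun z hz => ?_) (fun z hz => ?_)
  · refine ((integrable_cexp_mul_saalschutzKernel (n + 1) (hstrip z hz).1
      (hstrip z hz).2).const_mul ((-1) ^ (n + 1))).congr (ae_of_all _ fun t => ?_)
    push_cast
    ring
  · rw [hGamma z hz, ← integral_const_mul]
    congr 1
    ext t
    push_cast
    ring
end
end

section
/- Let α > −1/2 be real and define the normalized Bessel function 𝒥_α : ℂ → ℂ by 𝒥_α(z) = (1/(2^{α−1} √π Γ(α+1/2))) ∫_0^1 (1−t²)^{α−1/2} cos(zt) dt. Then 𝒥_α is an entire function and is positive definite on all of ℂ (i.e. positive definite on the full strip S_{−∞,+∞} = ℂ). In particular the function z ↦ (1/π) ∫_{−1}^{1} e^{izt} (1−t²)^{−1/2} dt, which agrees with the Bessel function J₀ on the real axis, is an entire positive definite function. -/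
open Complex MeasureTheory Filter Set Topology
open scoped Real BigOperators ComplexOrder

noncomputable section

/-- The normalized Bessel function of the first kind, defined by its Poisson-type integral. -/
def normBesselJ (α : ℝ) (z : ℂ) : ℂ :=
  (1 / ((2 : ℝ) ^ (α - 1) * Real.sqrt π * Real.Gamma (α + 1 / 2)) : ℝ) *
    ∫ t in Set.Ioo (0 : ℝ) 1, (((1 - t ^ 2) ^ (α - 1 / 2) : ℝ) : ℂ) * Complex.cos (z * t)

/-- The Bessel function `J₀`, defined by its power series. -/
def besselJ0 (z : ℂ) : ℂ :=
  ∑' m : ℕ, (-1) ^ m / ((m.factorial : ℂ) ^ 2) * (z / 2) ^ (2 * m)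

/-!
Both integrals have the form `F z = ∫ e^{i z t} w(t) dt` with `w ≥ 0` integrable on a bounded
interval; for `𝒥_α` write `cos (z t)` as the mean of `e^{i z t}` and `e^{-i z t}`. Differentiating
under the integral sign shows that `F` is entire. Since `e^{i (z - conj z') t} = e^{i z t} ·
conj (e^{i z' t})` for real `t`, the form `∑ F (z_k - conj z_l) ξ_k conj ξ_l` equals
`∫ w(t) |∑ e^{i z_k t} ξ_k|² dt ≥ 0`.

For the identification with `J₀`, the substitution `t = sin θ` gives
`∫_{-π/2}^{π/2} e^{i x sin θ} dθ`; expanding the exponential and using Wallis' integrals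
`∫_{-π/2}^{π/2} sin^{2m} θ dθ = π (2m)! / (4^m m!²)` (odd powers integrate to `0`) yields the power
series of `J₀`.
-/

open ComplexConjugate
open scoped Nat

namespace IsPosDefOnC

variable {f g : ℂ → ℂ} {S : Set ℂ}

theorem add (hf : IsPosDefOnC f S) (hg : IsPosDefOnC g S) : IsPosDefOnC (f + g) S := by
  intro n z hz ξ
  simpa only [Pi.add_apply, add_mul, Finset.sum_add_distrib] using
    add_nonneg (hf n z hz ξ) (hg n z hz ξ)

theorem const_mul (hf : IsPosDefOnC f S) {c : ℂ} (hc : 0 ≤ c) :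
    IsPosDefOnC (fun z => c * f z) S := by
  intro n z hz ξ
  simpa only [mul_assoc, ← Finset.mul_sum] using mul_nonneg hc (hf n z hz ξ)

end IsPosDefOnC

theorem sum_sum_mul_conj_eq_normSq {ι : Type*} [Fintype ι] (a ξ : ι → ℂ) :
    ∑ k, ∑ l, a k * conj (a l) * ξ k * conj (ξ l) = (normSq (∑ k, a k * ξ k) : ℂ) := by
  rw [← mul_conj, map_sum, Finset.sum_mul_sum]
  refine Finset.sum_congr rfl fun k _ => Finset.sum_congr rfl fun l _ => ?_
  rw [map_mul]
  ring

theorem cexp_I_mul_sub_conj_mul_ofReal (z z' : ℂ) (r : ℝ) :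
    cexp (I * (z - conj z') * r) = cexp (I * z * r) * conj (cexp (I * z' * r)) := by
  rw [← exp_conj, ← exp_add, map_mul, map_mul, conj_I, conj_ofReal]
  ring_nf

theorem norm_cexp_I_mul_mul_ofReal_le (z : ℂ) (r : ℝ) :
    ‖cexp (I * z * r)‖ ≤ Real.exp (‖z‖ * |r|) := by
  rw [norm_exp, Real.exp_le_exp]
  calc (I * z * r).re = -(z.im * r) := by simp
    _ ≤ |z.im * r| := neg_le_abs _
    _ ≤ ‖z‖ * |r| := by rw [abs_mul]; gcongr; exact abs_im_le_norm z

section ExpTransform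

variable {X : Type*} [MeasurableSpace X] {μ : Measure X} {w g : X → ℝ} {R : ℝ}

/-- The Fourier–Laplace transform `z ↦ ∫ e^{i z t} dν(t)` of the image measure `ν = g₊(w • μ)`. -/
def expTransform (μ : Measure X) (w g : X → ℝ) (z : ℂ) : ℂ :=
  ∫ x, cexp (I * z * g x) * w x ∂μ

theorem integrable_cexp_mul_weight (hw : Integrable w μ) (hg : AEStronglyMeasurable g μ)
    (hgR : ∀ᵐ x ∂μ, |g x| ≤ R) (z : ℂ) :
    Integrable (fun x => cexp (I * z * g x) * w x) μ :=
  hw.ofReal.bdd_mul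
    ((by fun_prop : Continuous fun r : ℝ => cexp (I * z * r)).comp_aestronglyMeasurable hg)
    (hgR.mono fun x hx => (norm_cexp_I_mul_mul_ofReal_le z (g x)).trans
      (Real.exp_le_exp.2 (mul_le_mul_of_nonneg_left hx (norm_nonneg z))))

theorem differentiable_expTransform (hw : Integrable w μ) (hg : AEStronglyMeasurable g μ)
    (hgR : ∀ᵐ x ∂μ, |g x| ≤ R) : Differentiable ℂ (expTransform μ w g) := by
  intro z₀
  have hmeas : AEStronglyMeasurable (fun x => cexp (I * z₀ * g x) * (I * g x) * w x) μ :=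
    ((by fun_prop : Continuous fun r : ℝ => cexp (I * z₀ * r) * (I * r)).comp_aestronglyMeasurable
      hg).mul (continuous_ofReal.comp_aestronglyMeasurable hw.1)
  refine (hasDerivAt_integral_of_dominated_loc_of_deriv_le (Metric.ball_mem_nhds z₀ one_pos)
    (F' := fun z x => cexp (I * z * g x) * (I * g x) * w x)
    (Eventually.of_forall fun z => (integrable_cexp_mul_weight hw hg hgR z).1)
    (integrable_cexp_mul_weight hw hg hgR z₀) hmeas
    (bound := fun x => Real.exp ((‖z₀‖ + 1) * R) * R * |w x|) ?_
    (hw.abs.const_mul _) ?_).2.differentiableAt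
  · filter_upwards [hgR] with x hx z hz
    have hz : ‖z‖ ≤ ‖z₀‖ + 1 := by
      linarith [mem_ball_iff_norm.1 hz, norm_le_norm_add_norm_sub' z z₀]
    have hexp : ‖cexp (I * z * g x)‖ ≤ Real.exp ((‖z₀‖ + 1) * R) :=
      (norm_cexp_I_mul_mul_ofReal_le z (g x)).trans
        (Real.exp_le_exp.2 (mul_le_mul hz hx (abs_nonneg _) (by positivity)))
    rw [norm_mul, norm_mul, norm_mul, norm_I, one_mul, norm_real, norm_real, Real.norm_eq_abs,
      Real.norm_eq_abs]
    gcongr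
  · refine Eventually.of_forall fun x z _ => ?_
    have : HasDerivAt (fun z : ℂ => I * z * g x) (I * g x) z := by
      simpa using ((hasDerivAt_id z).const_mul I).mul_const (g x : ℂ)
    exact this.cexp.mul_const _

theorem isPosDefOnC_expTransform (hw : Integrable w μ) (hw0 : 0 ≤ᵐ[μ] w)
    (hg : AEStronglyMeasurable g μ) (hgR : ∀ᵐ x ∂μ, |g x| ≤ R) :
    IsPosDefOnC (expTransform μ w g) univ := by
  intro n z _ ξ
  set e : Fin n → X → ℂ := fun k x => cexp (I * z k * g x)
  have hterm : ∀ k l, expTransform μ w g (z k - conj (z l)) * ξ k * conj (ξ l) =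
      ∫ x, e k x * conj (e l x) * ξ k * conj (ξ l) * w x ∂μ := by
    intro k l
    rw [expTransform, ← integral_mul_const, ← integral_mul_const]
    congr 1 with x
    rw [cexp_I_mul_sub_conj_mul_ofReal]
    ring
  have hint : ∀ k l, Integrable (fun x => e k x * conj (e l x) * ξ k * conj (ξ l) * w x) μ := by
    intro k l
    refine ((integrable_cexp_mul_weight hw hg hgR (z k - conj (z l))).mul_const
      (ξ k * conj (ξ l))).congr (Eventually.of_forall fun x => ?_)
    simp only [e, cexp_I_mul_sub_conj_mul_ofReal]
    ring
  have hsum : ∑ k, ∑ l, expTransform μ w g (z k - conj (z l)) * ξ k * conj (ξ l) =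
      ∫ x, ((normSq (∑ k, e k x * ξ k) * w x : ℝ) : ℂ) ∂μ := calc
    _ = ∑ k, ∫ x, ∑ l, e k x * conj (e l x) * ξ k * conj (ξ l) * w x ∂μ :=
      Finset.sum_congr rfl fun k _ => by
        simp only [hterm]
        exact (integral_finsetSum _ fun l _ => hint k l).symm
    _ = ∫ x, ∑ k, ∑ l, e k x * conj (e l x) * ξ k * conj (ξ l) * w x ∂μ :=
      (integral_finsetSum _ fun k _ => integrable_finsetSum _ fun l _ => hint k l).symm
    _ = _ := by
      congr 1 with x
      simp only [← Finset.sum_mul, sum_sum_mul_conj_eq_normSq, ofReal_mul]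
  rw [hsum, integral_complex_ofReal]
  exact zero_le_real.2
    (integral_nonneg_of_ae (hw0.mono fun x hx => mul_nonneg (normSq_nonneg _) hx))

theorem integral_mul_cos_eq_expTransform (hw : Integrable w μ) (hg : AEStronglyMeasurable g μ)
    (hgR : ∀ᵐ x ∂μ, |g x| ≤ R) (z : ℂ) :
    ∫ x, (w x : ℂ) * cos (z * g x) ∂μ = (expTransform μ w g z + expTransform μ w (-g) z) / 2 := by
  rw [expTransform, expTransform, ← integral_add (integrable_cexp_mul_weight hw hg hgR z)
    (integrable_cexp_mul_weight hw hg.neg (by simpa only [Pi.neg_apply, abs_neg] using hgR) z),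
    ← integral_div]
  congr 1 with x
  simp only [Complex.cos, Pi.neg_apply, ofReal_neg]
  ring_nf

theorem differentiable_integral_mul_cos (hw : Integrable w μ) (hg : AEStronglyMeasurable g μ)
    (hgR : ∀ᵐ x ∂μ, |g x| ≤ R) :
    Differentiable ℂ (fun z => ∫ x, (w x : ℂ) * cos (z * g x) ∂μ) := by
  simp only [integral_mul_cos_eq_expTransform hw hg hgR]
  exact ((differentiable_expTransform hw hg hgR).add (differentiable_expTransform hw hg.neg
    (by simpa only [Pi.neg_apply, abs_neg] using hgR))).div_const 2

theorem isPosDefOnC_integral_mul_cos (hw : Integrable w μ) (hw0 : 0 ≤ᵐ[μ] w)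
    (hg : AEStronglyMeasurable g μ) (hgR : ∀ᵐ x ∂μ, |g x| ≤ R) :
    IsPosDefOnC (fun z => ∫ x, (w x : ℂ) * cos (z * g x) ∂μ) univ := by
  simp only [integral_mul_cos_eq_expTransform hw hg hgR, div_eq_inv_mul]
  exact ((isPosDefOnC_expTransform hw hw0 hg hgR).add (isPosDefOnC_expTransform hw hw0 hg.neg
    (by simpa only [Pi.neg_apply, abs_neg] using hgR))).const_mul (by positivity)

end ExpTransform

section GegenbauerWeight

theorem one_sub_sq_rpow_eq_mul {t : ℝ} (ht : t ∈ Icc (-1 : ℝ) 1) (p : ℝ) :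
    (1 - t ^ 2) ^ p = (1 - t) ^ p * (1 + t) ^ p := by
  rw [← Real.mul_rpow (by linarith [ht.2]) (by linarith [ht.1])]
  ring_nf

theorem integrableOn_one_sub_sq_rpow {p : ℝ} (hp : -1 < p) :
    IntegrableOn (fun t : ℝ => (1 - t ^ 2) ^ p) (Icc (-1) 1) := by
  have hsing : IntervalIntegrable (fun t : ℝ => t ^ p) volume 0 2 :=
    intervalIntegral.intervalIntegrable_rpow' hp
  have hsub : IntegrableOn (fun t : ℝ => (1 - t) ^ p) (Icc (-1) 1) := by
    have h := (hsing.comp_sub_left 1).symm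
    norm_num at h
    rwa [intervalIntegrable_iff_integrableOn_Icc_of_le (by norm_num)] at h
  have hadd : IntegrableOn (fun t : ℝ => (1 + t) ^ p) (Icc (-1) 1) := by
    have h := hsing.comp_add_right 1
    norm_num at h
    rw [intervalIntegrable_iff_integrableOn_Icc_of_le (by norm_num)] at h
    simpa only [add_comm] using h
  have hright : IntegrableOn (fun t : ℝ => (1 - t ^ 2) ^ p) (Icc 0 1) := by
    refine ((hsub.mono_set (Icc_subset_Icc_left (by norm_num))).mul_continuousOn
      (ContinuousOn.rpow_const (f := fun t : ℝ => 1 + t) (p := p) (by fun_prop)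
        fun t ht => Or.inl (by linarith [ht.1]))
      isCompact_Icc).congr_fun (fun t ht => ?_) measurableSet_Icc
    rw [one_sub_sq_rpow_eq_mul ⟨by linarith [ht.1], ht.2⟩]
  have hleft : IntegrableOn (fun t : ℝ => (1 - t ^ 2) ^ p) (Icc (-1) 0) := by
    refine ((hadd.mono_set (Icc_subset_Icc_right (by norm_num))).mul_continuousOn
      (ContinuousOn.rpow_const (f := fun t : ℝ => 1 - t) (p := p) (by fun_prop)
        fun t ht => Or.inl (by linarith [ht.2]))
      isCompact_Icc).congr_fun (fun t ht => ?_) measurableSet_Icc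
    rw [one_sub_sq_rpow_eq_mul ⟨ht.1, by linarith [ht.2]⟩, mul_comm]
  simpa only [Icc_union_Icc_eq_Icc (by norm_num : (-1 : ℝ) ≤ 0) zero_le_one] using
    hleft.union hright

variable {s : Set ℝ}

theorem ae_restrict_abs_le_one (hs : MeasurableSet s) (hs' : s ⊆ Icc (-1) 1) :
    ∀ᵐ t ∂volume.restrict s, |t| ≤ 1 :=
  ae_restrict_of_forall_mem hs fun _ ht => abs_le.2 (hs' ht)

theorem ae_restrict_one_sub_sq_rpow_nonneg (hs : MeasurableSet s) (hs' : s ⊆ Icc (-1) 1)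
    (p : ℝ) : 0 ≤ᵐ[volume.restrict s] fun t : ℝ => (1 - t ^ 2) ^ p :=
  ae_restrict_of_forall_mem hs fun t ht =>
    Real.rpow_nonneg (by nlinarith [(hs' ht).1, (hs' ht).2]) p

end GegenbauerWeight

theorem integral_mul_one_sub_sq_rpow_neg_half {f : ℝ → ℂ} (hf : Continuous f) :
    ∫ t in Ioo (-1 : ℝ) 1, f t * ((1 - t ^ 2) ^ (-(1 / 2) : ℝ) : ℝ) =
      ∫ θ in -(π / 2)..π / 2, f (Real.sin θ) := by
  have hw : IntegrableOn (fun t : ℝ => (1 - t ^ 2) ^ (-(1 / 2) : ℝ)) (Icc (-1) 1) :=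
    integrableOn_one_sub_sq_rpow (by norm_num)
  have key := intervalIntegral.integral_deriv_smul_comp''' (a := -1) (b := 1) (f := Real.arcsin)
    (f' := fun t => (1 - t ^ 2) ^ (-(1 / 2) : ℝ)) (g := fun θ => f (Real.sin θ))
    Real.continuous_arcsin.continuousOn ?_ (hf.comp Real.continuous_sin).continuousOn
    ((hf.comp Real.continuous_sin).continuousOn.integrableOn_compact
      (isCompact_uIcc.image Real.continuous_arcsin)) ?_
  · rw [Real.arcsin_neg_one, Real.arcsin_one, intervalIntegral.integral_of_le (by norm_num),
      integral_Ioc_eq_integral_Ioo] at key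
    rw [← key]
    refine setIntegral_congr_fun measurableSet_Ioo fun t ht => ?_
    simp only [Function.comp_apply, Real.sin_arcsin ht.1.le ht.2.le, Complex.real_smul, mul_comm]
  · intro t ht
    simp only [min_eq_left (show (-1 : ℝ) ≤ 1 by norm_num),
      max_eq_right (show (-1 : ℝ) ≤ 1 by norm_num)] at ht
    have h := Real.hasDerivAt_arcsin ht.1.ne' ht.2.ne
    rw [one_div, Real.sqrt_eq_rpow, ← Real.rpow_neg (by nlinarith [ht.1, ht.2])] at h
    exact h.hasDerivWithinAt
  · rw [uIcc_of_le (by norm_num)]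
    refine (IntegrableOn.mul_continuousOn (Integrable.ofReal hw) hf.continuousOn
      isCompact_Icc).congr_fun (fun t ht => ?_) measurableSet_Icc
    simp only [Function.comp_apply, Real.sin_arcsin ht.1 ht.2, Complex.real_smul]
    rfl

theorem integral_sin_pow_add_two_symm (n : ℕ) :
    ∫ θ in -(π / 2)..π / 2, Real.sin θ ^ (n + 2) =
      (n + 1) / (n + 2) * ∫ θ in -(π / 2)..π / 2, Real.sin θ ^ n := by
  simp [integral_sin_pow]

theorem integral_sin_pow_odd_symm (m : ℕ) :
    ∫ θ in -(π / 2)..π / 2, Real.sin θ ^ (2 * m + 1) = 0 := by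
  induction m with
  | zero => simp
  | succ m ih =>
    rw [show 2 * (m + 1) + 1 = 2 * m + 1 + 2 by ring, integral_sin_pow_add_two_symm, ih, mul_zero]

theorem integral_sin_pow_even_symm (m : ℕ) :
    ∫ θ in -(π / 2)..π / 2, Real.sin θ ^ (2 * m) = π * (2 * m)! / (4 ^ m * (m ! : ℝ) ^ 2) := by
  induction m with
  | zero => simp
  | succ m ih =>
    rw [show 2 * (m + 1) = 2 * m + 2 by ring, integral_sin_pow_add_two_symm, ih,
      Nat.factorial_succ, Nat.factorial_succ, Nat.factorial_succ]
    push_cast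
    field_simp
    ring

theorem hasSum_integral_cexp_I_mul_sin (x : ℝ) :
    HasSum (fun n : ℕ => (I * x) ^ n / n ! * ((∫ θ in -(π / 2)..π / 2, Real.sin θ ^ n : ℝ) : ℂ))
      (∫ θ in -(π / 2)..π / 2, cexp (I * x * Real.sin θ)) := by
  have h := intervalIntegral.hasSum_integral_of_dominated_convergence
    (F := fun (n : ℕ) (θ : ℝ) => (I * x * Real.sin θ) ^ n / n !) (μ := volume)
    (a := -(π / 2)) (b := π / 2) (fun n _ => |x| ^ n / n !)
    (fun n => (by fun_prop : Continuous fun θ : ℝ => (I * x * Real.sin θ) ^ n / n !)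
      |>.aestronglyMeasurable)
    (fun n => Eventually.of_forall fun θ _ => ?_)
    (Eventually.of_forall fun _ _ => Real.summable_pow_div_factorial |x|) intervalIntegrable_const
    (Eventually.of_forall fun θ _ => NormedSpace.expSeries_div_hasSum_exp _)
  · simp only [← Complex.exp_eq_exp_ℂ] at h
    refine h.congr_fun fun n => ?_
    rw [← intervalIntegral.integral_ofReal, ← intervalIntegral.integral_const_mul]
    congr 1 with θ
    push_cast
    ring
  · rw [norm_div, norm_pow, norm_mul, norm_mul, norm_I, one_mul, norm_real, norm_real,
      Real.norm_eq_abs, Real.norm_eq_abs, Complex.norm_natCast]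
    gcongr
    exact mul_le_of_le_one_right (abs_nonneg x) (Real.abs_sin_le_one θ)

theorem one_div_pi_mul_integral_eq_besselJ0 (x : ℝ) :
    (1 / (π : ℂ)) * ∫ t in Ioo (-1 : ℝ) 1,
      cexp (I * x * t) * (((1 - t ^ 2) ^ (-(1 / 2) : ℝ) : ℝ) : ℂ) = besselJ0 x := by
  rw [integral_mul_one_sub_sq_rpow_neg_half (f := fun t : ℝ => cexp (I * x * t)) (by fun_prop)]
  have hodd : ∀ n ∉ range (fun m : ℕ => 2 * m),
      (I * x) ^ n / n ! * ((∫ θ in -(π / 2)..π / 2, Real.sin θ ^ n : ℝ) : ℂ) = 0 := by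
    intro n hn
    obtain ⟨m, rfl⟩ : Odd n := Nat.not_even_iff_odd.1 fun ⟨m, hm⟩ => hn ⟨m, by dsimp only; omega⟩
    rw [integral_sin_pow_odd_symm, ofReal_zero, mul_zero]
  have h := ((Function.Injective.hasSum_iff (mul_right_injective₀ two_ne_zero) hodd).2
    (hasSum_integral_cexp_I_mul_sin x)).mul_left (1 / (π : ℂ))
  refine (h.congr_fun fun m => ?_).tsum_eq.symm
  simp only [Function.comp_apply, integral_sin_pow_even_symm]
  have hπ : (π : ℂ) ≠ 0 := ofReal_ne_zero.2 Real.pi_ne_zero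
  push_cast
  rw [mul_pow, pow_mul I, I_sq, div_pow, pow_mul (2 : ℂ)]
  field_simp
  ring

/-- For `α > -1/2` the normalized Bessel function `𝒥_α` is an entire positive definite function;
in particular `z ↦ (1/π) ∫_{-1}^{1} e^{izt} (1-t²)^{-1/2} dt` is an entire positive definite
function agreeing with `J₀` on the real axis. -/
theorem stmt19 (α : ℝ) (hα : -(1 / 2 : ℝ) < α) :
    Differentiable ℂ (normBesselJ α) ∧ IsPosDefOnC (normBesselJ α) Set.univ ∧
    Differentiable ℂ (fun z : ℂ =>
      (1 / (π : ℂ)) *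
        ∫ t in Set.Ioo (-1 : ℝ) 1,
          Complex.exp (I * z * t) * (((1 - t ^ 2) ^ (-(1 / 2 : ℝ)) : ℝ) : ℂ)) ∧
    IsPosDefOnC (fun z : ℂ =>
      (1 / (π : ℂ)) *
        ∫ t in Set.Ioo (-1 : ℝ) 1,
          Complex.exp (I * z * t) * (((1 - t ^ 2) ^ (-(1 / 2 : ℝ)) : ℝ) : ℂ)) Set.univ ∧
    (∀ x : ℝ,
      (1 / (π : ℂ)) *
        ∫ t in Set.Ioo (-1 : ℝ) 1,
          Complex.exp (I * (x : ℂ) * t) * (((1 - t ^ 2) ^ (-(1 / 2 : ℝ)) : ℝ) : ℂ) =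
        besselJ0 (x : ℂ)) := by
  have hs₀ : Ioo (0 : ℝ) 1 ⊆ Icc (-1) 1 :=
    Ioo_subset_Icc_self.trans (Icc_subset_Icc_left (by norm_num))
  have hs₁ : Ioo (-1 : ℝ) 1 ⊆ Icc (-1) 1 := Ioo_subset_Icc_self
  have hw₀ := (integrableOn_one_sub_sq_rpow (by linarith : -1 < α - 1 / 2)).mono_set hs₀
  have hw₁ := (integrableOn_one_sub_sq_rpow (by norm_num : (-1 : ℝ) < -(1 / 2))).mono_set hs₁
  have hc : (0 : ℂ) ≤ ((1 / (2 ^ (α - 1) * √π * Real.Gamma (α + 1 / 2)) : ℝ) : ℂ) :=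
    zero_le_real.2 (by have := Real.Gamma_pos_of_pos (by linarith : 0 < α + 1 / 2); positivity)
  have hπ : (0 : ℂ) ≤ 1 / (π : ℂ) := by positivity
  refine ⟨?_, ?_, ?_, ?_, one_div_pi_mul_integral_eq_besselJ0⟩
  · exact (differentiable_integral_mul_cos hw₀ aestronglyMeasurable_id
      (ae_restrict_abs_le_one measurableSet_Ioo hs₀)).const_mul _
  · exact (isPosDefOnC_integral_mul_cos hw₀
      (ae_restrict_one_sub_sq_rpow_nonneg measurableSet_Ioo hs₀ _) aestronglyMeasurable_id
      (ae_restrict_abs_le_one measurableSet_Ioo hs₀)).const_mul hc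
  · exact (differentiable_expTransform hw₁ aestronglyMeasurable_id
      (ae_restrict_abs_le_one measurableSet_Ioo hs₁)).const_mul _
  · exact (isPosDefOnC_expTransform hw₁
      (ae_restrict_one_sub_sq_rpow_nonneg measurableSet_Ioo hs₁ _) aestronglyMeasurable_id
      (ae_restrict_abs_le_one measurableSet_Ioo hs₁)).const_mul hπ
end
end
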